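/- arXiv:1509.05535 — 5 statements merged into one kernel-verified Lean document; each statement's English description precedes it below -/
import Mathlib

section
/- In the Cantor system (X,f) of the construction, any two points are proximal: if x ≠ y are points of X both distinct from p, then liminf_{k→∞} d(f^k(x), f^k(y)) = 0. -/
/-!
Every orbit returns to the base vertex `v_{n,0}` of `G_n` within `∑ᵢ l(n,i)` steps, since a
walk in `G_n` that has left `v_{n,0}` must run through its circuit back to it. Every edge
leaving `v_{n+1,0}` maps to the loop `e_{n,0}` (the circuits of `G_{n+1}` start with `e_{n,0}`
under `φₙ`), so a point at `v_{N+S,0}` stays at `v_{N,0}` for the next `S` steps. Taking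
`S = ∑ᵢ l(N,i)`, the orbit of `x` hits `v_{N,0}` while the orbit of `y` waits there. At such
times both orbits agree with `p` up to level `N`, so they approach `p` together along a
sequence of times tending to infinity.
-/

open Filter Topology
open scoped ENNReal

/-- `φ` is a graph homomorphism from `(V₁,E₁)` to `(V₂,E₂)`. -/
def IsGraphHom {V₁ V₂ : Type*} (E₁ : V₁ → V₁ → Prop) (E₂ : V₂ → V₂ → Prop)
    (φ : V₁ → V₂) : Prop :=
  ∀ u v, E₁ u v → E₂ (φ u) (φ v)

/-- `φ` is edge surjective. -/
def IsEdgeSurj {V₁ V₂ : Type*} (E₁ : V₁ → V₁ → Prop) (E₂ : V₂ → V₂ → Prop)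
    (φ : V₁ → V₂) : Prop :=
  ∀ u v, E₂ u v → ∃ u' v', E₁ u' v' ∧ φ u' = u ∧ φ v' = v

/-- `φ` is +directional. -/
def IsPlusDirectional {V₁ V₂ : Type*} (E₁ : V₁ → V₁ → Prop) (φ : V₁ → V₂) : Prop :=
  ∀ u v v', E₁ u v → E₁ u v' → φ v = φ v'

/-- `φ` is bidirectional. -/
def IsBidirectional {V₁ V₂ : Type*} (E₁ : V₁ → V₁ → Prop) (φ : V₁ → V₂) : Prop :=
  IsPlusDirectional E₁ φ ∧ ∀ u u' v, E₁ u v → E₁ u' v → φ u = φ u'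

/-- `φ` is a cover: a +directional edge-surjective graph homomorphism. -/
def IsCover {V₁ V₂ : Type*} (E₁ : V₁ → V₁ → Prop) (E₂ : V₂ → V₂ → Prop)
    (φ : V₁ → V₂) : Prop :=
  IsGraphHom E₁ E₂ φ ∧ IsPlusDirectional E₁ φ ∧ IsEdgeSurj E₁ E₂ φ

/-- every vertex has an incoming and an outgoing edge. -/
def IsSurjDigraph {V : Type*} (E : V → V → Prop) : Prop :=
  (∀ v, ∃ u, E u v) ∧ ∀ u, ∃ v, E u v

/-- the inverse limit `V_𝒢` of a sequence of graph maps. -/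
abbrev InvLim (V : ℕ → Type*) (φ : ∀ n, V (n + 1) → V n) : Type _ :=
  { x : ∀ n, V n // ∀ n, φ n (x (n + 1)) = x n }

/-- the relation `E_𝒢` on `V_𝒢`. -/
def ERel {V : ℕ → Type*} (E : ∀ n, V n → V n → Prop) (φ : ∀ n, V (n + 1) → V n)
    (x y : InvLim V φ) : Prop :=
  ∀ n, E n (x.1 n) (y.1 n)

/-- the product-of-discrete topology on the inverse limit, given explicitly. -/
def invLimTop (V : ℕ → Type*) (φ : ∀ n, V (n + 1) → V n) :
    TopologicalSpace (InvLim V φ) :=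
  @instTopologicalSpaceSubtype _ _ (@Pi.topologicalSpace ℕ V fun _ => ⊥)

/-- the distance function of an explicitly given metric space structure. -/
noncomputable def mdist {X : Type*} (m : MetricSpace X) (x y : X) : ℝ :=
  @dist X m.toDist x y

/-- the topology induced by an explicitly given metric space structure. -/
def mtop {X : Type*} (m : MetricSpace X) : TopologicalSpace X :=
  @UniformSpace.toTopologicalSpace X m.toUniformSpace

/-- the (half-open) list of vertices `vtx i 0, vtx i 1, …, vtx i (len-1)` of
the circuit `c_{n,i}`, the final vertex (equal to the initial one) omitted. -/
def circList {Vn : Type*} (vtx : ℕ → ℕ → Vn) (i len : ℕ) : List Vn :=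
  List.ofFn fun j : Fin len => vtx i (j : ℕ)

theorem liminf_eq_of_mapClusterPt_of_le {ι α : Type*} [ConditionallyCompleteLinearOrder α]
    [TopologicalSpace α] [OrderTopology α] [NoMaxOrder α] {l : Filter ι} {a : ι → α} {c : α}
    (hc : MapClusterPt c l a) (ha : ∀ i, c ≤ a i) : liminf a l = c := by
  refine le_antisymm (hc.liminf_le ⟨c, eventually_map.2 (.of_forall ha)⟩)
    (le_liminf_of_le ?_ (.of_forall ha))
  obtain ⟨c', hc'⟩ := exists_gt c
  exact .of_frequently_le (hc.frequently (Iic_mem_nhds hc'))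

theorem tendsto_mdist_of_tendsto {X ι : Type*} [t : TopologicalSpace X] (m : MetricSpace X)
    (hm : mtop m = t) {l : Filter ι} {u w : ι → X} {p : X} (hu : Tendsto u l (𝓝 p))
    (hw : Tendsto w l (𝓝 p)) : Tendsto (fun i => mdist m (u i) (w i)) l (𝓝 0) := by
  subst hm
  simpa [mdist] using @Tendsto.dist _ _ m.toPseudoMetricSpace _ _ _ _ _ hu hw

/-- The graph `G_n` with base vertex `b` and circuits `c i 0 = b, c i 1, …, c i (l i) = b`,
`1 ≤ i ≤ n`; only the edges of `R` need to lie on the loop at `b` and the circuits. -/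
structure IsCircuitBouquet {W : Type*} (R : W → W → Prop) (b : W) (n : ℕ) (c : ℕ → ℕ → W)
    (l : ℕ → ℕ) : Prop where
  start : ∀ i, 1 ≤ i → i ≤ n → c i 0 = b
  finish : ∀ i, 1 ≤ i → i ≤ n → c i (l i) = b
  ne_base : ∀ i j, 1 ≤ i → i ≤ n → 0 < j → j < l i → c i j ≠ b
  inj : ∀ i j i' j', 1 ≤ i → i ≤ n → 1 ≤ i' → i' ≤ n → 0 < j → j < l i → 0 < j' → j' < l i' →
    c i j = c i' j' → i = i' ∧ j = j'
  eq_base_or : ∀ u, u = b ∨ ∃ i j, 1 ≤ i ∧ i ≤ n ∧ 0 < j ∧ j < l i ∧ u = c i j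
  rel : ∀ u v, R u v →
    (u = b ∧ v = b) ∨ ∃ i j, 1 ≤ i ∧ i ≤ n ∧ j < l i ∧ u = c i j ∧ v = c i (j + 1)

namespace IsCircuitBouquet

variable {W : Type*} {R : W → W → Prop} {b : W} {n : ℕ} {c : ℕ → ℕ → W} {l : ℕ → ℕ}

theorem of_forall_eq_base (hW : ∀ u : W, u = b) : IsCircuitBouquet R b 0 c l where
  start _ h1 h0 := absurd (h1.trans h0) (by decide)
  finish _ h1 h0 := absurd (h1.trans h0) (by decide)
  ne_base _ _ h1 h0 := absurd (h1.trans h0) (by decide)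
  inj _ _ _ _ h1 h0 := absurd (h1.trans h0) (by decide)
  eq_base_or u := .inl (hW u)
  rel u v _ := .inl ⟨hW u, hW v⟩

theorem eq_succ_of_rel (hB : IsCircuitBouquet R b n c l) {i j : ℕ} {v : W} (hi1 : 1 ≤ i)
    (hin : i ≤ n) (hj : 0 < j) (hjl : j < l i) (h : R (c i j) v) : v = c i (j + 1) := by
  have hne := hB.ne_base i j hi1 hin hj hjl
  rcases hB.rel _ _ h with ⟨hb, -⟩ | ⟨i', j', hi'1, hi'n, hj'l, heq, rfl⟩
  · exact absurd hb hne
  · have hj' : 0 < j' := Nat.pos_of_ne_zero fun h0 =>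
      hne (heq.trans (h0 ▸ hB.start i' hi'1 hi'n))
    obtain ⟨rfl, rfl⟩ := hB.inj i j i' j' hi1 hin hi'1 hi'n hj hjl hj' hj'l heq
    rfl

theorem eq_base_or_of_rel_base (hB : IsCircuitBouquet R b n c l) {v : W} (h : R b v) :
    v = b ∨ ∃ i, 1 ≤ i ∧ i ≤ n ∧ v = c i 1 := by
  rcases hB.rel _ _ h with ⟨-, rfl⟩ | ⟨i, j, hi1, hin, hjl, hb, rfl⟩
  · exact .inl rfl
  · obtain rfl : j = 0 := by
      by_contra hj
      exact hB.ne_base i j hi1 hin (Nat.pos_of_ne_zero hj) hjl hb.symm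
    exact .inr ⟨i, hi1, hin, rfl⟩

variable {w : ℕ → W}

theorem walk_eq_add (hB : IsCircuitBouquet R b n c l) (hw : ∀ k, R (w k) (w (k + 1)))
    {i j k : ℕ} (hi1 : 1 ≤ i) (hin : i ≤ n) (hj : 0 < j) (hk : w k = c i j) :
    ∀ t, j + t ≤ l i → w (k + t) = c i (j + t) := by
  intro t
  induction t with
  | zero => exact fun _ => hk
  | succ t ih =>
    intro ht
    exact hB.eq_succ_of_rel (j := j + t) hi1 hin (by omega) (by omega)
      (ih (by omega) ▸ hw (k + t))

theorem exists_le_sum_walk_eq_base (hB : IsCircuitBouquet R b n c l)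
    (hw : ∀ k, R (w k) (w (k + 1))) (k : ℕ) :
    ∃ d ≤ ∑ i ∈ Finset.Icc 1 n, l i, w (k + d) = b := by
  rcases hB.eq_base_or (w k) with h | ⟨i, j, hi1, hin, hj, hjl, hk⟩
  · exact ⟨0, Nat.zero_le _, h⟩
  · refine ⟨l i - j, (Nat.sub_le _ _).trans ?_, ?_⟩
    · exact Finset.single_le_sum (fun _ _ => Nat.zero_le _) (Finset.mem_Icc.2 ⟨hi1, hin⟩)
    · rw [hB.walk_eq_add hw hi1 hin hj hk _ (by omega), Nat.add_sub_cancel' hjl.le]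
      exact hB.finish i hi1 hin

end IsCircuitBouquet

theorem apply_one_eq_of_map_circList_eq {W W' : Type*} {g : W' → W} {c' : ℕ → ℕ → W'}
    {c : ℕ → ℕ → W} {l : ℕ → ℕ} {b : W} {i n L : ℕ} (hL : 2 ≤ L) (hl : 1 ≤ l i) (hin : i ≤ n)
    (h : List.map g (circList c' i L) = b :: (((List.range' i (n + 1 - i)).flatMap fun k =>
      circList c k (l k) ++ circList c k (l k)) ++ [b])) :
    g (c' i 1) = c i 0 := by
  obtain ⟨L, rfl⟩ := Nat.exists_eq_add_of_le' hL
  obtain ⟨r, hr⟩ := Nat.exists_eq_add_of_le' hl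
  obtain ⟨s, hs⟩ : ∃ s, n + 1 - i = s + 1 := ⟨n - i, by omega⟩
  rw [hs, List.range'_succ, List.flatMap_cons, circList, hr] at h
  simp only [circList, List.ofFn_succ, List.map_cons, List.cons_append, List.cons.injEq] at h
  exact h.2.1

namespace InvLim

variable {V : ℕ → Type*} {φ : ∀ n, V (n + 1) → V n} {v0 : ∀ n, V n}

theorem coord_eq_of_le (hφ0 : ∀ n, φ n (v0 (n + 1)) = v0 n) (z : InvLim V φ) {N i : ℕ}
    (h : z.1 N = v0 N) (hi : i ≤ N) : z.1 i = v0 i := by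
  induction N with
  | zero => exact Nat.le_zero.1 hi ▸ h
  | succ N ih =>
    rcases hi.eq_or_lt with rfl | hlt
    · exact h
    · exact ih (by rw [← z.2 N, h, hφ0]) (Nat.le_of_lt_succ hlt)

theorem tendsto_of_coord_eq [∀ n, TopologicalSpace (V n)] {u : ℕ → InvLim V φ}
    {p : InvLim V φ} (h : ∀ N i, i ≤ N → (u N).1 i = p.1 i) : Tendsto u atTop (𝓝 p) := by
  rw [tendsto_subtype_rng, tendsto_pi_nhds]
  exact fun i => tendsto_const_nhds.congr' (eventually_atTop.2 ⟨i, fun N hN => (h N i hN).symm⟩)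

variable {E : ∀ n, V n → V n → Prop} {f : InvLim V φ → InvLim V φ}

theorem orbit_rel (hf : ∀ z, ERel E φ z (f z)) (z : InvLim V φ) (n k : ℕ) :
    E n ((f^[k] z).1 n) ((f^[k + 1] z).1 n) := by
  rw [Function.iterate_succ_apply']
  exact hf _ n

theorem orbit_coord_eq_base_of_add (hφ0 : ∀ n, φ n (v0 (n + 1)) = v0 n)
    (hdesc : ∀ n v, E (n + 1) (v0 (n + 1)) v → φ n v = v0 n) (hf : ∀ z, ERel E φ z (f z))
    (z : InvLim V φ) (n : ℕ) : ∀ t k, (f^[k] z).1 (n + t) = v0 (n + t) →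
      (f^[k + t] z).1 n = v0 n
  | 0, _, h => h
  | t + 1, k, h => by
    have hnext : (f^[k + 1] z).1 (n + t) = v0 (n + t) := by
      rw [← (f^[k + 1] z).2 (n + t)]
      exact hdesc _ _ (h ▸ orbit_rel hf z (n + t + 1) k)
    rw [show k + (t + 1) = k + 1 + t by omega]
    exact orbit_coord_eq_base_of_add hφ0 hdesc hf z n t (k + 1) hnext

theorem exists_ge_orbit_coord_eq_base (hφ0 : ∀ n, φ n (v0 (n + 1)) = v0 n)
    (hdesc : ∀ n v, E (n + 1) (v0 (n + 1)) v → φ n v = v0 n) (hf : ∀ z, ERel E φ z (f z))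
    {vtx : ∀ n, ℕ → ℕ → V n} {len : ℕ → ℕ → ℕ}
    (hB : ∀ n, IsCircuitBouquet (E n) (v0 n) n (vtx n) (len n)) (x y : InvLim V φ) (N : ℕ) :
    ∃ k, N ≤ k ∧ (f^[k] x).1 N = v0 N ∧ (f^[k] y).1 N = v0 N := by
  set S := ∑ i ∈ Finset.Icc 1 N, len N i
  obtain ⟨d₁, -, hy⟩ := (hB (N + S)).exists_le_sum_walk_eq_base (orbit_rel hf y (N + S)) N
  obtain ⟨d₂, hd₂, hx⟩ := (hB N).exists_le_sum_walk_eq_base (orbit_rel hf x N) (N + d₁)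
  refine ⟨N + d₁ + d₂, by omega, hx, ?_⟩
  -- having reached the base of level `N + S`, `y` stays at the base of level `N` for `S` steps
  rw [show N + S = N + (S - d₂) + d₂ by omega] at hy
  exact coord_eq_of_le hφ0 _ (orbit_coord_eq_base_of_add hφ0 hdesc hf y _ d₂ _ hy) le_self_add

end InvLim

theorem stmt14_general
    (V : ℕ → Type) [∀ n, TopologicalSpace (V n)]
    (E : ∀ n, V n → V n → Prop) (φ : ∀ n, V (n + 1) → V n)
    (len : ℕ → ℕ → ℕ) (v0 : ∀ n, V n) (vtx : ∀ n, ℕ → ℕ → V n)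
    (hV0 : ∀ u : V 0, u = v0 0)
    (hends : ∀ n i, 1 ≤ i → i ≤ n → vtx n i 0 = v0 n ∧ vtx n i (len n i) = v0 n)
    (hlen2 : ∀ n i, 1 ≤ i → i ≤ n → 2 ≤ len n i)
    (hne : ∀ n i j, 1 ≤ i → i ≤ n → 0 < j → j < len n i → vtx n i j ≠ v0 n)
    (hinj : ∀ n i j i' j', 1 ≤ i → i ≤ n → 1 ≤ i' → i' ≤ n →
      0 < j → j < len n i → 0 < j' → j' < len n i' →
      vtx n i j = vtx n i' j' → i = i' ∧ j = j')
    (hall : ∀ n, 1 ≤ n → ∀ u : V n,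
      u = v0 n ∨ ∃ i j, 1 ≤ i ∧ i ≤ n ∧ 0 < j ∧ j < len n i ∧ u = vtx n i j)
    (hE : ∀ n, 1 ≤ n → ∀ u v : V n, E n u v ↔
      (u = v0 n ∧ v = v0 n) ∨
      ∃ i j, 1 ≤ i ∧ i ≤ n ∧ j < len n i ∧ u = vtx n i j ∧ v = vtx n i (j + 1))
    (hphi0 : ∀ n, φ n (v0 (n + 1)) = v0 n)
    (hphitop : ∀ n j, j ≤ len (n + 1) (n + 1) → φ n (vtx (n + 1) (n + 1) j) = v0 n)
    (hphiwalk : ∀ n i, 1 ≤ i → i ≤ n →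
      List.map (φ n) (circList (vtx (n + 1)) i (len (n + 1) i)) =
        v0 n :: (((List.range' i (n + 1 - i)).flatMap fun k =>
          circList (vtx n) k (len n k) ++ circList (vtx n) k (len n k)) ++ [v0 n]))
    (f : InvLim V φ ≃ₜ InvLim V φ)
    (hf : ∀ x y : InvLim V φ, ERel E φ x y ↔ f x = y)
    (m : MetricSpace (InvLim V φ))
    (hm : mtop m = (inferInstance : TopologicalSpace (InvLim V φ)))
    (p : InvLim V φ) (hp : ∀ n, p.1 n = v0 n) :
    ∀ x y : InvLim V φ, x ≠ y → x ≠ p → y ≠ p →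
      Filter.liminf (fun k => mdist m ((⇑f)^[k] x) ((⇑f)^[k] y)) Filter.atTop = 0 := by
  intro x y _ _ _
  have hB : ∀ n, IsCircuitBouquet (E n) (v0 n) n (vtx n) (len n) := by
    rintro (_ | n)
    · exact .of_forall_eq_base hV0
    · exact ⟨fun i h1 h2 => (hends _ i h1 h2).1, fun i h1 h2 => (hends _ i h1 h2).2, hne _,
        hinj _, hall _ n.succ_pos, fun u v => (hE _ n.succ_pos u v).1⟩
  have hdesc : ∀ n v, E (n + 1) (v0 (n + 1)) v → φ n v = v0 n := by
    intro n v hv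
    rcases (hB (n + 1)).eq_base_or_of_rel_base hv with rfl | ⟨i, hi1, hin, rfl⟩
    · exact hphi0 n
    have hlen : 2 ≤ len (n + 1) i := hlen2 (n + 1) i hi1 hin
    rcases hin.lt_or_eq with hlt | rfl
    · have hin : i ≤ n := Nat.le_of_lt_succ hlt
      rw [apply_one_eq_of_map_circList_eq hlen (one_le_two.trans (hlen2 n i hi1 hin)) hin
        (hphiwalk n i hi1 hin)]
      exact (hends n i hi1 hin).1
    · exact hphitop n 1 (by omega)
  have hf' : ∀ z, ERel E φ z (f z) := fun z => (hf z (f z)).2 rfl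
  choose K hK hKx hKy using
    InvLim.exists_ge_orbit_coord_eq_base hphi0 hdesc hf' hB x y
  have hconv : ∀ z, (∀ N, ((⇑f)^[K N] z).1 N = v0 N) →
      Tendsto (fun N => (⇑f)^[K N] z) atTop (𝓝 p) := fun z hz =>
    InvLim.tendsto_of_coord_eq fun N i hi =>
      (hp i).symm ▸ InvLim.coord_eq_of_le hphi0 _ (hz N) hi
  refine liminf_eq_of_mapClusterPt_of_le (.of_comp (tendsto_atTop_mono hK tendsto_id) ?_)
    fun k => @dist_nonneg _ m.toPseudoMetricSpace _ _
  exact (tendsto_mdist_of_tendsto m hm (hconv x hKx) (hconv y hKy)).mapClusterPt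

theorem stmt14
    (V : ℕ → Type) [∀ n, TopologicalSpace (V n)] [∀ n, DiscreteTopology (V n)]
    [∀ n, Fintype (V n)]
    (E : ∀ n, V n → V n → Prop) (φ : ∀ n, V (n + 1) → V n)
    (len : ℕ → ℕ → ℕ) (v0 : ∀ n, V n) (vtx : ∀ n, ℕ → ℕ → V n)
    (hV0 : ∀ u : V 0, u = v0 0)
    (hE0 : ∀ u v : V 0, E 0 u v ↔ u = v0 0 ∧ v = v0 0)
    (hends : ∀ n i, 1 ≤ i → i ≤ n → vtx n i 0 = v0 n ∧ vtx n i (len n i) = v0 n)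
    (hlen2 : ∀ n i, 1 ≤ i → i ≤ n → 2 ≤ len n i)
    (hrec : ∀ n i, 1 ≤ i → i ≤ n →
      len (n + 1) i = 2 + 2 * ∑ j ∈ Finset.Icc i n, len n j)
    (hne : ∀ n i j, 1 ≤ i → i ≤ n → 0 < j → j < len n i → vtx n i j ≠ v0 n)
    (hinj : ∀ n i j i' j', 1 ≤ i → i ≤ n → 1 ≤ i' → i' ≤ n →
      0 < j → j < len n i → 0 < j' → j' < len n i' →
      vtx n i j = vtx n i' j' → i = i' ∧ j = j')
    (hall : ∀ n, 1 ≤ n → ∀ u : V n,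
      u = v0 n ∨ ∃ i j, 1 ≤ i ∧ i ≤ n ∧ 0 < j ∧ j < len n i ∧ u = vtx n i j)
    (hE : ∀ n, 1 ≤ n → ∀ u v : V n, E n u v ↔
      (u = v0 n ∧ v = v0 n) ∨
      ∃ i j, 1 ≤ i ∧ i ≤ n ∧ j < len n i ∧ u = vtx n i j ∧ v = vtx n i (j + 1))
    (hphi0 : ∀ n, φ n (v0 (n + 1)) = v0 n)
    (hphitop : ∀ n j, j ≤ len (n + 1) (n + 1) → φ n (vtx (n + 1) (n + 1) j) = v0 n)
    (hphiwalk : ∀ n i, 1 ≤ i → i ≤ n →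
      List.map (φ n) (circList (vtx (n + 1)) i (len (n + 1) i)) =
        v0 n :: (((List.range' i (n + 1 - i)).flatMap fun k =>
          circList (vtx n) k (len n k) ++ circList (vtx n) k (len n k)) ++ [v0 n]))
    (hcov : ∀ n, IsCover (E (n + 1)) (E n) (φ n))
    (f : InvLim V φ ≃ₜ InvLim V φ)
    (hf : ∀ x y : InvLim V φ, ERel E φ x y ↔ f x = y)
    (m : MetricSpace (InvLim V φ))
    (hm : mtop m = (inferInstance : TopologicalSpace (InvLim V φ)))
    (p : InvLim V φ) (hp : ∀ n, p.1 n = v0 n) :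
    ∀ x y : InvLim V φ, x ≠ y → x ≠ p → y ≠ p →
      Filter.liminf (fun k => mdist m ((⇑f)^[k] x) ((⇑f)^[k] y)) Filter.atTop = 0 :=
  stmt14_general V E φ len v0 vtx hV0 hends hlen2 hne hinj hall hE hphi0 hphitop hphiwalk f hf m hm
    p hp
end

section
/- In the construction, let x = (u₀,u₁,…) ≠ y = (v₀,v₁,…) be points of X with deg(x) = deg(y) = l < ∞, and suppose there exists N such that for all n ≥ N both uₙ and vₙ lie on the circuit c_{n,l} with uₙ ≠ v_{n,0} ≠ vₙ (so gap(uₙ,vₙ) is defined), and that limsup_{n→∞} |gap(uₙ,vₙ)| < ∞. Then there exists d ∈ ℤ with f^d(x) = y. -/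
open Filter Topology
open scoped ENNReal

theorem stmt15
    (V : ℕ → Type) [∀ n, TopologicalSpace (V n)] [∀ n, DiscreteTopology (V n)]
    [∀ n, Fintype (V n)]
    (E : ∀ n, V n → V n → Prop) (φ : ∀ n, V (n + 1) → V n)
    (len : ℕ → ℕ → ℕ) (v0 : ∀ n, V n) (vtx : ∀ n, ℕ → ℕ → V n)
    (hV0 : ∀ u : V 0, u = v0 0)
    (hE0 : ∀ u v : V 0, E 0 u v ↔ u = v0 0 ∧ v = v0 0)
    (hends : ∀ n i, 1 ≤ i → i ≤ n → vtx n i 0 = v0 n ∧ vtx n i (len n i) = v0 n)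
    (hlen2 : ∀ n i, 1 ≤ i → i ≤ n → 2 ≤ len n i)
    (hrec : ∀ n i, 1 ≤ i → i ≤ n →
      len (n + 1) i = 2 + 2 * ∑ j ∈ Finset.Icc i n, len n j)
    (hne : ∀ n i j, 1 ≤ i → i ≤ n → 0 < j → j < len n i → vtx n i j ≠ v0 n)
    (hinj : ∀ n i j i' j', 1 ≤ i → i ≤ n → 1 ≤ i' → i' ≤ n →
      0 < j → j < len n i → 0 < j' → j' < len n i' →
      vtx n i j = vtx n i' j' → i = i' ∧ j = j')
    (hall : ∀ n, 1 ≤ n → ∀ u : V n,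
      u = v0 n ∨ ∃ i j, 1 ≤ i ∧ i ≤ n ∧ 0 < j ∧ j < len n i ∧ u = vtx n i j)
    (hE : ∀ n, 1 ≤ n → ∀ u v : V n, E n u v ↔
      (u = v0 n ∧ v = v0 n) ∨
      ∃ i j, 1 ≤ i ∧ i ≤ n ∧ j < len n i ∧ u = vtx n i j ∧ v = vtx n i (j + 1))
    (hphi0 : ∀ n, φ n (v0 (n + 1)) = v0 n)
    (hphitop : ∀ n j, j ≤ len (n + 1) (n + 1) → φ n (vtx (n + 1) (n + 1) j) = v0 n)
    (hphiwalk : ∀ n i, 1 ≤ i → i ≤ n →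
      List.map (φ n) (circList (vtx (n + 1)) i (len (n + 1) i)) =
        v0 n :: (((List.range' i (n + 1 - i)).flatMap fun k =>
          circList (vtx n) k (len n k) ++ circList (vtx n) k (len n k)) ++ [v0 n]))
    (hcov : ∀ n, IsCover (E (n + 1)) (E n) (φ n))
    (f : InvLim V φ ≃ₜ InvLim V φ)
    (hf : ∀ x y : InvLim V φ, ERel E φ x y ↔ f x = y)
    (degv : ∀ n, V n → ℕ∞)
    (hdegv0 : ∀ n, degv n (v0 n) = ⊤)
    (hdegvi : ∀ n i j, 1 ≤ i → i ≤ n → 0 < j → j < len n i →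
      degv n (vtx n i j) = (i : ℕ∞)) :
    ∀ x y : InvLim V φ, x ≠ y →
      ∀ (L N : ℕ) (jx jy : ℕ → ℕ),
        (⨅ n, degv n (x.1 n)) = (L : ℕ∞) →
        (⨅ n, degv n (y.1 n)) = (L : ℕ∞) →
        (∀ n, N ≤ n → 1 ≤ L ∧ L ≤ n ∧
          0 < jx n ∧ jx n < len n L ∧ 0 < jy n ∧ jy n < len n L ∧
          x.1 n = vtx n L (jx n) ∧ y.1 n = vtx n L (jy n)) →
        Filter.limsup
          (fun n => (((jy n : ℤ) - (jx n : ℤ)).natAbs : ℝ≥0∞)) Filter.atTop < ⊤ →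
        ∃ d : ℤ, ((f.toEquiv : Equiv.Perm (InvLim V φ)) ^ d) x = y := by
  intro x y hxy0 L N jx jy hdx hdy hmain hls
  obtain ⟨hL1, hLN, -⟩ := hmain N le_rfl
  -- two points of the inverse limit agreeing eventually are equal
  have tail : ∀ (z w : InvLim V φ) (m : ℕ), (∀ n, m ≤ n → z.1 n = w.1 n) → z = w := by
    intro z w m hm
    have key : ∀ t n, m ≤ n + t → z.1 n = w.1 n := by
      intro t
      induction t with
      | zero => intro n hn; exact hm n (by omega)
      | succ t ih =>
        intro n hn
        have h1 : z.1 (n + 1) = w.1 (n + 1) := ih (n + 1) (by omega)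
        rw [← z.2 n, ← w.2 n, h1]
    exact Subtype.ext (funext fun n => key m n (by omega))
  -- f moves one step along the circuit
  have succ : ∀ (z : InvLim V φ) n jj, N ≤ n → 0 < jj → jj < len n L →
      z.1 n = vtx n L jj → (f z).1 n = vtx n L (jj + 1) := by
    intro z n jj hn h0 hlt hzn
    have hLn : L ≤ n := le_trans hLN hn
    have h1n : 1 ≤ n := le_trans hL1 hLn
    have hrel : ERel E φ z (f z) := (hf z (f z)).mpr rfl
    have hEn := hrel n
    rw [hE n h1n] at hEn
    rcases hEn with ⟨hu, -⟩ | ⟨i, j', hi1, hin, hjlt', hu, hv⟩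
    · exact absurd (hzn ▸ hu) (hne n L jj hL1 hLn h0 hlt)
    · rw [hzn] at hu
      rcases Nat.eq_zero_or_pos j' with h0' | h0'
      · subst h0'
        rw [(hends n i hi1 hin).1] at hu
        exact absurd hu (hne n L jj hL1 hLn h0 hlt)
      · obtain ⟨hiL, hjj⟩ := hinj n L jj i j' hL1 hLn hi1 hin h0 hlt h0' hjlt' hu
        subst hiL; subst hjj
        exact hv
  -- iterated version
  have pw : ∀ (k : ℕ) (z : InvLim V φ) n jj, N ≤ n → 0 < jj → jj + k < len n L →
      z.1 n = vtx n L jj →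
      ((f.toEquiv ^ k : Equiv.Perm (InvLim V φ)) z).1 n = vtx n L (jj + k) := by
    intro k
    induction k with
    | zero => intro z n jj _ _ _ h; simpa using h
    | succ k ih =>
      intro z n jj hn h0 hlt hzn
      have h1 : (f z).1 n = vtx n L (jj + 1) := succ z n jj hn h0 (by omega) hzn
      have h2 := ih (f z) n (jj + 1) hn (by omega) (by omega) h1
      have h3 : ((f.toEquiv ^ (k + 1) : Equiv.Perm (InvLim V φ)) z) =
          ((f.toEquiv ^ k : Equiv.Perm (InvLim V φ)) (f z)) := by
        rw [pow_succ, Equiv.Perm.mul_apply]; rfl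
      rw [h3, h2]
      congr 1
      omega
  -- the key covering-step lemma
  have step : ∀ (z : InvLim V φ) (j : ℕ → ℕ),
      (∀ n, N ≤ n → 0 < j n ∧ j n < len n L ∧ z.1 n = vtx n L (j n)) →
      ∀ n, N ≤ n → j (n + 1) = j n + 1 ∨ j (n + 1) = j n + 1 + len n L := by
    intro z j hz n hn
    obtain ⟨hj0, hjlt, hzn⟩ := hz n hn
    obtain ⟨hj0', hjlt', hzn'⟩ := hz (n + 1) (by omega)
    have hLn : L ≤ n := le_trans hLN hn
    have hphi : φ n (vtx (n + 1) L (j (n + 1))) = vtx n L (j n) := by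
      rw [← hzn', z.2 n, hzn]
    have hw := hphiwalk n L hL1 hLn
    set m := len n L with hm
    set cL : List (V n) := circList (vtx n) L m with hcL
    set B : List (V n) := (List.range' (L + 1) (n - L)).flatMap
        (fun k => circList (vtx n) k (len n k) ++ circList (vtx n) k (len n k)) with hB
    have hsplit : (List.range' L (n + 1 - L)).flatMap
        (fun k => circList (vtx n) k (len n k) ++ circList (vtx n) k (len n k))
        = (cL ++ cL) ++ B := by
      have h' : n + 1 - L = (n - L) + 1 := by omega
      rw [h', List.range'_succ, List.flatMap_cons]
    rw [hsplit] at hw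
    have hcLlen : cL.length = m := by simp [hcL, circList]
    have h2m : (cL ++ cL).length = m + m := by
      rw [List.length_append, hcLlen]
    have hAlen : ((cL ++ cL) ++ B).length = m + m + B.length := by
      rw [List.length_append, h2m]
    have hlen_eq : len (n + 1) L = ((cL ++ cL) ++ B).length + 2 := by
      have hl := congrArg List.length hw
      simp [circList] at hl
      omega
    have hlhs : (List.map (φ n) (circList (vtx (n + 1)) L (len (n + 1) L)))[j (n + 1)]?
        = some (vtx n L (j n)) := by
      have h1 : (circList (vtx (n + 1)) L (len (n + 1) L))[j (n + 1)]?
          = some (vtx (n + 1) L (j (n + 1))) := by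
        rw [circList, List.getElem?_ofFn]
        simp [List.ofFnNthVal, hjlt']
      rw [List.getElem?_map, h1, Option.map_some, hphi]
    have hq := congrArg (fun l => l[j (n + 1)]?) hw
    beta_reduce at hq
    rw [hlhs] at hq
    obtain ⟨q, hqeq⟩ : ∃ q, j (n + 1) = q + 1 := ⟨j (n + 1) - 1, by omega⟩
    rw [hqeq] at hq
    simp only [List.getElem?_cons_succ] at hq
    have hqub : q < ((cL ++ cL) ++ B).length + 1 := by omega
    rcases Nat.lt_or_ge q (((cL ++ cL) ++ B).length) with hqA | hqA
    · rw [List.getElem?_append_left hqA] at hq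
      rcases Nat.lt_or_ge q (m + m) with hq2m | hq2m
      · rw [List.getElem?_append_left (by omega)] at hq
        have hval : ∃ r, r < m ∧ (q = r ∨ q = r + m) ∧
            (cL ++ cL)[q]? = some (vtx n L r) := by
          rcases Nat.lt_or_ge q m with h | h
          · refine ⟨q, h, Or.inl rfl, ?_⟩
            rw [List.getElem?_append_left (by omega), hcL, circList, List.getElem?_ofFn]
            simp [List.ofFnNthVal, h]
          · refine ⟨q - m, by omega, Or.inr (by omega), ?_⟩
            rw [List.getElem?_append_right (by rw [hcLlen]; omega), hcL, circList,
              List.getElem?_ofFn]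
            have h3 : q - m < m := by omega
            simp [List.ofFnNthVal, hcLlen, h3]
        obtain ⟨r, hrm, hqr, hval⟩ := hval
        rw [hval] at hq
        have heqv : vtx n L (j n) = vtx n L r := by
          exact Option.some.inj hq
        rcases Nat.eq_zero_or_pos r with hr0 | hr0
        · subst hr0
          rw [(hends n L hL1 hLn).1] at heqv
          exact absurd heqv (hne n L (j n) hL1 hLn hj0 hjlt)
        · obtain ⟨-, hjr⟩ := hinj n L (j n) L r hL1 hLn hL1 hLn hj0 hjlt hr0 hrm heqv
          omega
      · rw [List.getElem?_append_right (by omega)] at hq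
        have hmem : vtx n L (j n) ∈ B := List.mem_of_getElem? hq.symm
        rw [hB, List.mem_flatMap] at hmem
        obtain ⟨k, hk, hmem2⟩ := hmem
        rw [List.mem_range'_1] at hk
        have hex : ∃ qq, qq < len n k ∧ vtx n k qq = vtx n L (j n) := by
          rcases List.mem_append.mp hmem2 with h | h <;>
          · rw [circList, List.mem_ofFn] at h
            obtain ⟨⟨qq, hqq⟩, he⟩ := h
            exact ⟨qq, hqq, he⟩
        obtain ⟨qq, hqqlt, hqqe⟩ := hex
        have hk1 : 1 ≤ k := by omega
        have hkn : k ≤ n := by omega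
        rcases Nat.eq_zero_or_pos qq with h0 | h0
        · subst h0
          rw [(hends n k hk1 hkn).1] at hqqe
          exact absurd hqqe.symm (hne n L (j n) hL1 hLn hj0 hjlt)
        · obtain ⟨hkL, -⟩ := hinj n k qq L (j n) hk1 hkn hL1 hLn h0 hqqlt hj0 hjlt hqqe
          omega
    · have hqA' : q = ((cL ++ cL) ++ B).length := by omega
      rw [List.getElem?_append_right (by omega)] at hq
      rw [hqA'] at hq
      simp at hq
      exact absurd hq (hne n L (j n) hL1 hLn hj0 hjlt)
  -- a bound on the gaps
  obtain ⟨M, hMlt⟩ := ENNReal.exists_nat_gt (ne_top_of_lt hls)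
  have hev : ∀ᶠ n in Filter.atTop,
      (((((jy n : ℤ) - (jx n : ℤ)).natAbs : ℕ) : ℝ≥0∞)) < (M : ℝ≥0∞) :=
    Filter.eventually_lt_of_limsup_lt hMlt
  rw [Filter.eventually_atTop] at hev
  obtain ⟨a, ha⟩ := hev
  have ha' : ∀ n, a ≤ n → ((jy n : ℤ) - (jx n : ℤ)).natAbs < M := by
    intro n hn
    exact_mod_cast ha n hn
  -- growth of circuit lengths
  have grow : ∀ n, L ≤ n → 2 * (n - L) + 2 ≤ len n L := by
    intro n hn
    induction n, hn using Nat.le_induction with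
    | base => simpa using hlen2 L L hL1 le_rfl
    | succ n hn ih =>
      have h1 : len (n + 1) L = 2 + 2 * ∑ j ∈ Finset.Icc L n, len n j :=
        hrec n L hL1 hn
      have h2 : len n L ≤ ∑ j ∈ Finset.Icc L n, len n j :=
        Finset.single_le_sum (fun i _ => Nat.zero_le _) (Finset.mem_Icc.mpr ⟨le_rfl, hn⟩)
      omega
  set n₁ : ℕ := N + a + L + M with hn₁
  -- eventual constancy of the gap
  have hstepx := step x jx (fun n hn =>
    ⟨(hmain n hn).2.2.1, (hmain n hn).2.2.2.1, (hmain n hn).2.2.2.2.2.2.1⟩)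
  have hstepy := step y jy (fun n hn =>
    ⟨(hmain n hn).2.2.2.2.1, (hmain n hn).2.2.2.2.2.1, (hmain n hn).2.2.2.2.2.2.2⟩)
  have hconst : ∀ n, n₁ ≤ n → (jy n : ℤ) - (jx n : ℤ) = (jy n₁ : ℤ) - (jx n₁ : ℤ) := by
    intro n hn
    induction n, hn using Nat.le_induction with
    | base => rfl
    | succ n hn ih =>
      have hNn : N ≤ n := by omega
      have hx1 := hstepx n hNn
      have hy1 := hstepy n hNn
      have hb1 := ha' n (by omega)
      have hb2 := ha' (n + 1) (by omega)
      have hlenb := grow n (by omega)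
      have hLMn : L + M ≤ n := by omega
      rw [← ih]
      omega
  set d : ℤ := (jy n₁ : ℤ) - (jx n₁ : ℤ) with hd
  refine ⟨d, ?_⟩
  rcases le_or_gt 0 d with hd0 | hd0
  · have hk : d = (d.toNat : ℤ) := (Int.toNat_of_nonneg hd0).symm
    rw [hk, zpow_natCast]
    apply tail _ y n₁
    intro n hn
    have hnN : N ≤ n := by omega
    obtain ⟨-, -, hjx0, hjxlt, hjy0, hjylt, hxv, hyv⟩ := hmain n hnN
    have hjy : jy n = jx n + d.toNat := by
      have := hconst n hn
      omega
    rw [hyv, hjy]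
    exact pw d.toNat x n (jx n) hnN hjx0 (by omega) hxv
  · have hk : d = -(((-d).toNat : ℕ) : ℤ) := by omega
    have hx' : ((f.toEquiv ^ (-d).toNat : Equiv.Perm (InvLim V φ)) y) = x := by
      apply tail _ x n₁
      intro n hn
      have hnN : N ≤ n := by omega
      obtain ⟨-, -, hjx0, hjxlt, hjy0, hjylt, hxv, hyv⟩ := hmain n hnN
      have hjx : jx n = jy n + (-d).toNat := by
        have := hconst n hn
        omega
      rw [hxv, hjx]
      exact pw (-d).toNat y n (jy n) hnN hjy0 (by omega) hyv
    rw [hk, zpow_neg, zpow_natCast]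
    rw [Equiv.Perm.inv_def, Equiv.symm_apply_eq]
    exact hx'.symm
end

section
/- In the Cantor system (X,f) of the construction, if x ≠ y are points of X with f^d(x) = y for some integer d ≠ 0, then limsup_{k→∞} d(f^k(x), f^k(y)) > 0. -/
open Filter Topology
open scoped ENNReal

/-!
If `y = f^p x` (`p > 0`) and `x`, `y` were asymptotic, every level of the orbit of `x` would be
eventually `p`-periodic. At a level `M > n + p` the circuits `c_{M,i}` with `i ≤ n` are longer than
`p + 1`, so the orbit eventually avoids them, and every other vertex of `G_M` lies over `v0 n`:
the orbit of `x`, hence also that of `y`, converges to the fixed point `(v0 n)ₙ`. But a point with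
`xₙ ≠ v0 n` sits, at each level `m + 1`, on a circuit `c_{m+1,I}` with `I ≤ n`, in front of the
block `2c_{m,n+1}` of its image walk; its orbit therefore passes over the interior of
`c_{n+1,n+1}` at times `≥ m - n` for every `m`, and does not converge to `(v0 n)ₙ`. So `x` and `y`
both equal the fixed point. Finally, in the compact space `X` a coordinate that differs infinitely
often keeps the distance above a Lebesgue number infinitely often.
-/

section CircuitLists

variable {α : Type*} (c : ℕ → ℕ → α) (l : ℕ → ℕ)

lemma length_circList (i L : ℕ) : (circList c i L).length = L := by
  simp [circList]

lemma getElem?_circList_eq_some_iff {i L j : ℕ} {u : α} :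
    (circList c i L)[j]? = some u ↔ j < L ∧ c i j = u := by
  simp [circList, List.getElem?_ofFn]

/-- The walk `2c_i + 2c_{i+1} + ⋯ + 2c_n`, each circuit listed without its final vertex. -/
def doubledCircuits (i n : ℕ) : List α :=
  (List.range' i (n + 1 - i)).flatMap fun k => circList c k (l k) ++ circList c k (l k)

lemma doubledCircuits_of_le {i n : ℕ} (h : i ≤ n) :
    doubledCircuits c l i n =
      circList c i (l i) ++ circList c i (l i) ++ doubledCircuits c l (i + 1) n := by
  rw [doubledCircuits, show n + 1 - i = n - i + 1 by omega, List.range'_succ,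
    List.flatMap_cons, doubledCircuits, show n + 1 - (i + 1) = n - i by omega]

lemma exists_doubledCircuits_eq_append {i b n : ℕ} (hib : i ≤ b) (hbn : b ≤ n + 1) :
    ∃ P, doubledCircuits c l i n = P ++ doubledCircuits c l b n := by
  refine ⟨(List.range' i (b - i)).flatMap fun k => circList c k (l k) ++ circList c k (l k), ?_⟩
  have hsplit := List.range'_append (s := i) (m := b - i) (n := n + 1 - b) (step := 1)
  rw [show i + 1 * (b - i) = b by omega, show b - i + (n + 1 - b) = n + 1 - i by omega] at hsplit
  rw [doubledCircuits, doubledCircuits, ← hsplit, List.flatMap_append]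

lemma mem_doubledCircuits {i n : ℕ} {u : α} (hu : u ∈ doubledCircuits c l i n) :
    ∃ k j, i ≤ k ∧ k ≤ n ∧ j < l k ∧ c k j = u := by
  obtain ⟨k, hk, hu⟩ := List.mem_flatMap.mp hu
  obtain ⟨⟨j, hj⟩, rfl⟩ := List.mem_ofFn.mp ((List.mem_append.mp hu).elim id id)
  rw [List.mem_range'_1] at hk
  exact ⟨k, j, by omega, by omega, hj, rfl⟩

end CircuitLists

/-- The hypotheses of the construction: `Gₙ` is a bouquet of the loop at `v0 n` and the circuits
`c_{n,i} = vtx n i 0, …, vtx n i (len n i)` for `1 ≤ i ≤ n`, and `φ n` wraps `c_{n+1,n+1}` onto the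
loop and `c_{n+1,i}` onto `e + 2c_{n,i} + ⋯ + 2c_{n,n} + e`. -/
structure IsCircuitTower {V : ℕ → Type*} (E : ∀ n, V n → V n → Prop) (φ : ∀ n, V (n + 1) → V n)
    (len : ℕ → ℕ → ℕ) (v0 : ∀ n, V n) (vtx : ∀ n, ℕ → ℕ → V n) : Prop where
  eq_v0_zero : ∀ u : V 0, u = v0 0
  vtx_ends : ∀ n i, 1 ≤ i → i ≤ n → vtx n i 0 = v0 n ∧ vtx n i (len n i) = v0 n
  two_le_len : ∀ n i, 1 ≤ i → i ≤ n → 2 ≤ len n i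
  len_succ : ∀ n i, 1 ≤ i → i ≤ n → len (n + 1) i = 2 + 2 * ∑ j ∈ Finset.Icc i n, len n j
  vtx_ne_v0 : ∀ n i j, 1 ≤ i → i ≤ n → 0 < j → j < len n i → vtx n i j ≠ v0 n
  vtx_inj : ∀ n i j i' j', 1 ≤ i → i ≤ n → 1 ≤ i' → i' ≤ n →
    0 < j → j < len n i → 0 < j' → j' < len n i' → vtx n i j = vtx n i' j' → i = i' ∧ j = j'
  eq_v0_or_vtx : ∀ n, 1 ≤ n → ∀ u : V n,
    u = v0 n ∨ ∃ i j, 1 ≤ i ∧ i ≤ n ∧ 0 < j ∧ j < len n i ∧ u = vtx n i j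
  edge_iff : ∀ n, 1 ≤ n → ∀ u v : V n, E n u v ↔
    (u = v0 n ∧ v = v0 n) ∨ ∃ i j, 1 ≤ i ∧ i ≤ n ∧ j < len n i ∧ u = vtx n i j ∧ v = vtx n i (j + 1)
  map_v0 : ∀ n, φ n (v0 (n + 1)) = v0 n
  map_vtx_top : ∀ n j, j ≤ len (n + 1) (n + 1) → φ n (vtx (n + 1) (n + 1) j) = v0 n
  map_circList : ∀ n i, 1 ≤ i → i ≤ n →
    (circList (vtx (n + 1)) i (len (n + 1) i)).map (φ n) =
      v0 n :: (doubledCircuits (vtx n) (len n) i n ++ [v0 n])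

namespace IsCircuitTower

variable {V : ℕ → Type*} {E : ∀ n, V n → V n → Prop} {φ : ∀ n, V (n + 1) → V n}
  {len : ℕ → ℕ → ℕ} {v0 : ∀ n, V n} {vtx : ∀ n, ℕ → ℕ → V n}

lemma two_add_two_mul_len_le (h : IsCircuitTower E φ len v0 vtx) {n i : ℕ} (hi : 1 ≤ i)
    (hin : i ≤ n) : 2 + 2 * len n i ≤ len (n + 1) i := by
  have := Finset.single_le_sum (f := len n) (fun _ _ => Nat.zero_le _)
    (Finset.mem_Icc.mpr ⟨le_rfl, hin⟩)
  rw [h.len_succ n i hi hin]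
  omega

lemma le_len (h : IsCircuitTower E φ len v0 vtx) {m i : ℕ} (hi : 1 ≤ i) (him : i ≤ m) :
    m - i + 2 ≤ len m i := by
  induction m, him using Nat.le_induction with
  | base => simpa using h.two_le_len i i hi le_rfl
  | succ m him ih =>
    have := h.two_add_two_mul_len_le hi him
    omega

lemma getElem?_walk_eq_some_iff (h : IsCircuitTower E φ len v0 vtx) {n i j : ℕ} (hi : 1 ≤ i)
    (hin : i ≤ n) {u : V n} :
    (v0 n :: (doubledCircuits (vtx n) (len n) i n ++ [v0 n]))[j]? = some u ↔
      j < len (n + 1) i ∧ φ n (vtx (n + 1) i j) = u := by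
  rw [← h.map_circList n i hi hin, List.getElem?_map, Option.map_eq_some_iff]
  constructor
  · rintro ⟨w, hw, rfl⟩
    obtain ⟨hj, rfl⟩ := (getElem?_circList_eq_some_iff _).mp hw
    exact ⟨hj, rfl⟩
  · rintro ⟨hj, rfl⟩
    exact ⟨_, (getElem?_circList_eq_some_iff _).mpr ⟨hj, rfl⟩, rfl⟩

lemma map_vtx_succ (h : IsCircuitTower E φ len v0 vtx) {n i s : ℕ} (hi : 1 ≤ i) (hin : i ≤ n)
    (hs : s < len n i) : φ n (vtx (n + 1) i (s + 1)) = vtx n i s := by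
  have hmem : (v0 n :: (doubledCircuits (vtx n) (len n) i n ++ [v0 n]))[s + 1]? =
      some (vtx n i s) := by
    rw [List.getElem?_cons_succ, doubledCircuits_of_le _ _ hin, List.append_assoc,
      List.append_assoc, List.getElem?_append_left (by rw [length_circList]; exact hs)]
    exact (getElem?_circList_eq_some_iff _).mpr ⟨hs, rfl⟩
  exact ((h.getElem?_walk_eq_some_iff hi hin).mp hmem).2

lemma eq_v0_or_vtx_of_mem_doubledCircuits (h : IsCircuitTower E φ len v0 vtx) {n i : ℕ}
    (hi : 1 ≤ i) {u : V n} (hu : u ∈ doubledCircuits (vtx n) (len n) i n) :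
    u = v0 n ∨ ∃ k j, i ≤ k ∧ k ≤ n ∧ 0 < j ∧ j < len n k ∧ u = vtx n k j := by
  obtain ⟨k, j, hik, hkn, hj, rfl⟩ := mem_doubledCircuits _ _ hu
  rcases Nat.eq_zero_or_pos j with rfl | hj0
  · exact Or.inl (h.vtx_ends n k (by omega) hkn).1
  · exact Or.inr ⟨k, j, hik, hkn, hj0, hj, rfl⟩

lemma map_vtx_eq_v0_or_vtx (h : IsCircuitTower E φ len v0 vtx) {n i j : ℕ} (hi : 1 ≤ i)
    (hin : i ≤ n) (hj : j < len (n + 1) i) :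
    φ n (vtx (n + 1) i j) = v0 n ∨
      ∃ k j', i ≤ k ∧ k ≤ n ∧ 0 < j' ∧ j' < len n k ∧ φ n (vtx (n + 1) i j) = vtx n k j' := by
  have hmem := List.mem_of_getElem? ((h.getElem?_walk_eq_some_iff hi hin).mpr ⟨hj, rfl⟩)
  simp only [List.mem_cons, List.mem_append, List.not_mem_nil, or_false] at hmem
  rcases hmem with hv | hu | hv
  · exact Or.inl hv
  · exact h.eq_v0_or_vtx_of_mem_doubledCircuits hi hu
  · exact Or.inl hv

lemma eq_vtx_succ_of_edge (h : IsCircuitTower E φ len v0 vtx) {n i j : ℕ} (hi : 1 ≤ i)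
    (hin : i ≤ n) (hj : 0 < j) (hjl : j < len n i) {v : V n} (hE : E n (vtx n i j) v) :
    v = vtx n i (j + 1) := by
  have hne := h.vtx_ne_v0 n i j hi hin hj hjl
  rcases (h.edge_iff n (by omega) _ _).mp hE with ⟨hu, -⟩ | ⟨i', j', hi', hi'n, hj', hu, rfl⟩
  · exact absurd hu hne
  · rcases Nat.eq_zero_or_pos j' with rfl | hj'0
    · exact absurd (hu.trans (h.vtx_ends n i' hi' hi'n).1) hne
    · obtain ⟨rfl, rfl⟩ := h.vtx_inj n i j i' j' hi hin hi' hi'n hj hjl hj'0 hj' hu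
      rfl

lemma eq_vtx_of_edge_vtx_succ (h : IsCircuitTower E φ len v0 vtx) {n i j : ℕ} (hi : 1 ≤ i)
    (hin : i ≤ n) (hj : 0 < j) (hjl : j + 1 < len n i) {w : V n}
    (hE : E n w (vtx n i (j + 1))) : w = vtx n i j := by
  have hne := h.vtx_ne_v0 n i (j + 1) hi hin (by omega) hjl
  rcases (h.edge_iff n (by omega) _ _).mp hE with ⟨-, hv⟩ | ⟨i', j', hi', hi'n, hj', rfl, hv⟩
  · exact absurd hv hne
  · rcases Nat.lt_or_ge (j' + 1) (len n i') with hj'l | hj'l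
    · obtain ⟨rfl, hjj⟩ := h.vtx_inj n i (j + 1) i' (j' + 1) hi hin hi' hi'n (by omega) hjl
        (by omega) hj'l hv
      rw [show j' = j by omega]
    · rw [show j' + 1 = len n i' by omega, (h.vtx_ends n i' hi' hi'n).2] at hv
      exact absurd hv hne


lemma coord_eq_vtx_one (h : IsCircuitTower E φ len v0 vtx) {z : InvLim V φ} {n m i : ℕ}
    (hi : 1 ≤ i) (hin : i ≤ n) (hnm : n ≤ m) (hz : z.1 m = vtx m i (m - n + 1)) :
    z.1 n = vtx n i 1 := by
  induction m, hnm using Nat.le_induction with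
  | base => simpa using hz
  | succ m hnm ih =>
    apply ih
    have := h.le_len hi (hin.trans hnm)
    rw [← z.2 m, hz, show m + 1 - n + 1 = m - n + 1 + 1 by omega]
    exact h.map_vtx_succ hi (hin.trans hnm) (by omega)

lemma exists_vtx_of_coord_ne_v0 (h : IsCircuitTower E φ len v0 vtx) {z : InvLim V φ} {n m : ℕ}
    (hnm : n ≤ m) (hz : z.1 n ≠ v0 n) :
    ∃ i j, 1 ≤ i ∧ i ≤ n ∧ 0 < j ∧ j < len m i ∧ z.1 m = vtx m i j := by
  have hn : 1 ≤ n := Nat.one_le_iff_ne_zero.mpr fun hn0 => hz (by subst hn0; exact h.eq_v0_zero _)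
  induction m, hnm using Nat.le_induction with
  | base => exact (h.eq_v0_or_vtx n hn (z.1 n)).resolve_left hz
  | succ m hnm ih =>
    obtain ⟨i, j, hi, hin, hj, hjl, hij⟩ := ih
    have hne : z.1 m ≠ v0 m := hij ▸ h.vtx_ne_v0 m i j hi (hin.trans hnm) hj hjl
    rcases h.eq_v0_or_vtx (m + 1) (by omega) (z.1 (m + 1)) with hv | ⟨I, J, hI, hIm, hJ, hJl, hIJ⟩
    · exact absurd (by rw [← z.2 m, hv, h.map_v0]) hne
    refine ⟨I, J, hI, ?_, hJ, hJl, hIJ⟩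
    rcases Nat.lt_or_ge I (m + 1) with hIlt | hIge
    · rcases h.map_vtx_eq_v0_or_vtx hI (by omega) hJl with hv | ⟨k, j', hIk, hkm, hj', hj'l, hv⟩
      · exact absurd (by rw [← z.2 m, hIJ, hv]) hne
      · have hik := h.vtx_inj m i j k j' hi (hin.trans hnm) (by omega) hkm hj hjl hj' hj'l
          (by rw [← hij, ← z.2 m, hIJ, hv])
        omega
    · obtain rfl : I = m + 1 := by omega
      exact absurd (by rw [← z.2 m, hIJ, h.map_vtx_top m J hJl.le]) hne

variable {f : InvLim V φ → InvLim V φ}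

lemma iterate_coord_eq_vtx_add (h : IsCircuitTower E φ len v0 vtx) (hf : ∀ z, ERel E φ z (f z))
    {z : InvLim V φ} {n i j t : ℕ} (hi : 1 ≤ i) (hin : i ≤ n) (hj : 0 < j)
    (hjt : j + t < len n i) (hz : z.1 n = vtx n i j) : (f^[t] z).1 n = vtx n i (j + t) := by
  induction t with
  | zero => exact hz
  | succ t ih =>
    have hE := hf (f^[t] z) n
    rw [ih (by omega), ← Function.iterate_succ_apply' f] at hE
    rw [← add_assoc]
    exact h.eq_vtx_succ_of_edge hi hin (by omega) (by omega) hE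

lemma coord_eq_vtx_of_iterate (h : IsCircuitTower E φ len v0 vtx) (hf : ∀ z, ERel E φ z (f z))
    {z : InvLim V φ} {n i j t : ℕ} (hi : 1 ≤ i) (hin : i ≤ n) (hj : 0 < j)
    (hjt : j + t < len n i) (hz : (f^[t] z).1 n = vtx n i (j + t)) : z.1 n = vtx n i j := by
  induction t with
  | zero => exact hz
  | succ t ih =>
    have hE := hf (f^[t] z) n
    rw [← Function.iterate_succ_apply' f, hz, ← add_assoc] at hE
    exact ih (by omega) (h.eq_vtx_of_edge_vtx_succ hi hin (by omega) (by omega) hE)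

/-- If level `M > n + p` of the orbit is eventually `p`-periodic, the orbit cannot stay on a
circuit `c_{M,i}` with `i ≤ n`: that circuit is longer than `p + 1`, so `p` steps after entering
it the orbit is at a different vertex. -/
lemma eventually_coord_eq_v0 (h : IsCircuitTower E φ len v0 vtx) (hf : ∀ z, ERel E φ z (f z))
    {a : InvLim V φ} {n p M : ℕ} (hp : 0 < p) (hM : n + p < M)
    (hper : ∀ᶠ k in atTop, (f^[k] a).1 M = (f^[k + p] a).1 M) :
    ∀ᶠ k in atTop, (f^[k] a).1 n = v0 n := by
  obtain ⟨K, hK⟩ := eventually_atTop.mp hper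
  refine eventually_atTop.mpr ⟨K + (Finset.Icc 1 M).sup (len M), fun k hk => ?_⟩
  by_contra hne
  obtain ⟨i, j, hi, hin, hj, hjl, hij⟩ := h.exists_vtx_of_coord_ne_v0 (m := M) (by omega) hne
  have hlen := h.le_len hi (show i ≤ M by omega)
  have hjL : j ≤ (Finset.Icc 1 M).sup (len M) :=
    hjl.le.trans (Finset.le_sup (Finset.mem_Icc.mpr ⟨hi, by omega⟩))
  set k' := k - (j - 1)
  have hstart : (f^[k'] a).1 M = vtx M i 1 := by
    refine h.coord_eq_vtx_of_iterate hf (t := j - 1) hi (by omega) one_pos (by omega) ?_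
    rw [← Function.iterate_add_apply, show j - 1 + k' = k by omega, hij,
      show 1 + (j - 1) = j by omega]
  have hshift : (f^[k' + p] a).1 M = vtx M i (1 + p) := by
    rw [add_comm, Function.iterate_add_apply]
    exact h.iterate_coord_eq_vtx_add hf hi (by omega) one_pos (by omega) hstart
  have := (h.vtx_inj M i 1 i (1 + p) hi (by omega) hi (by omega) one_pos (by omega) (by omega)
    (by omega) ((hstart.symm.trans (hK k' (by omega))).trans hshift)).2
  omega

lemma le_length_of_getElem?_eq_vtx (h : IsCircuitTower E φ len v0 vtx) {m b i j J : ℕ}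
    {P : List (V m)} (hi : 1 ≤ i) (hib : i < b) (him : i ≤ m) (hj : 0 < j) (hjl : j < len m i)
    (hget : (v0 m :: (P ++ (doubledCircuits (vtx m) (len m) b m ++ [v0 m])))[J]? =
      some (vtx m i j)) : J ≤ P.length := by
  by_contra hJP
  obtain ⟨J', rfl⟩ : ∃ J', J = J' + 1 := ⟨J - 1, by omega⟩
  rw [List.getElem?_cons_succ, List.getElem?_append_right (by omega)] at hget
  have hmem := List.mem_of_getElem? hget
  simp only [List.mem_append, List.mem_cons, List.not_mem_nil, or_false] at hmem
  have hne := h.vtx_ne_v0 m i j hi him hj hjl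
  rcases hmem with hmem | hv
  · rcases h.eq_v0_or_vtx_of_mem_doubledCircuits (by omega) hmem with
      hv | ⟨k, j', hbk, hkm, hj', hj'l, hv⟩
    · exact hne hv
    · have := h.vtx_inj m i j k j' hi him (by omega) hkm hj hjl hj' hj'l hv
      omega
  · exact hne hv

/-- At level `m + 1` the point `a` lies on a circuit `c_{m+1,I}` with `I ≤ n`, in front of the
blocks `2c_{m,n+1} + ⋯` of its image walk. Following the walk, the orbit reaches the vertex of
`c_{m,n+1}` at position `m - n`, which lies above `vtx (n+1) (n+1) 1 ≠ v0 (n+1)`. -/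
lemma exists_iterate_coord_ne_v0 (h : IsCircuitTower E φ len v0 vtx)
    (hf : ∀ z, ERel E φ z (f z)) {a : InvLim V φ} {n m : ℕ} (ha : a.1 n ≠ v0 n) (hnm : n < m) :
    ∃ k, m - n ≤ k ∧ (f^[k] a).1 (n + 1) ≠ v0 (n + 1) := by
  obtain ⟨I, J, hI, hIn, hJ, hJl, hIJ⟩ := h.exists_vtx_of_coord_ne_v0 (m := m + 1) (by omega) ha
  obtain ⟨i, j, hi, hin, hj, hjl, hij⟩ := h.exists_vtx_of_coord_ne_v0 (m := m) (by omega) ha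
  obtain ⟨P, hP⟩ :=
    exists_doubledCircuits_eq_append (vtx m) (len m) (i := I) (b := n + 1) (n := m) (by omega)
      (by omega)
  have hW := fun {t : ℕ} {u : V m} => h.getElem?_walk_eq_some_iff (j := t) (u := u) hI
    (show I ≤ m by omega)
  rw [hP, List.append_assoc] at hW
  have hJP : J ≤ P.length :=
    h.le_length_of_getElem?_eq_vtx (b := n + 1) hi (by omega) (by omega) hj hjl
      (hW.mpr ⟨hJl, by rw [← hIJ, a.2 m, hij]⟩)
  set s := m - n
  have hs : s < len m (n + 1) := by
    have := h.le_len (m := m) (i := n + 1) (by omega) (by omega)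
    omega
  obtain ⟨ht, hts⟩ := (hW (t := P.length + 1 + s) (u := vtx m (n + 1) s)).mp (by
    rw [show P.length + 1 + s = P.length + s + 1 by omega, List.getElem?_cons_succ,
      List.getElem?_append_right (by omega), show P.length + s - P.length = s by omega,
      doubledCircuits_of_le _ _ (show n + 1 ≤ m by omega), List.append_assoc, List.append_assoc,
      List.getElem?_append_left (by rw [length_circList]; exact hs)]
    exact (getElem?_circList_eq_some_iff _).mpr ⟨hs, rfl⟩)
  refine ⟨P.length + 1 + s - J, by omega, ?_⟩
  have hfwd := h.iterate_coord_eq_vtx_add hf (t := P.length + 1 + s - J) hI (by omega) hJ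
    (by omega) hIJ
  rw [show J + (P.length + 1 + s - J) = P.length + 1 + s by omega] at hfwd
  rw [h.coord_eq_vtx_one (m := m) (by omega) le_rfl (by omega) (by
    rw [← (f^[P.length + 1 + s - J] a).2 m, hfwd, hts, show m - (n + 1) + 1 = s by omega])]
  have := h.two_le_len (n + 1) (n + 1) (by omega) le_rfl
  exact h.vtx_ne_v0 _ _ _ (by omega) le_rfl one_pos (by omega)

lemma coord_eq_v0_of_eventually (h : IsCircuitTower E φ len v0 vtx)
    (hf : ∀ z, ERel E φ z (f z)) {a : InvLim V φ}
    (hv : ∀ n, ∀ᶠ k in atTop, (f^[k] a).1 n = v0 n) (n : ℕ) : a.1 n = v0 n := by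
  by_contra ha
  obtain ⟨T, hT⟩ := eventually_atTop.mp (hv (n + 1))
  obtain ⟨k, hk, hne⟩ := h.exists_iterate_coord_ne_v0 hf (m := n + T + 1) ha (by omega)
  exact hne (hT k (by omega))

lemma iterate_eq_self_of_eventually_coord_eq (h : IsCircuitTower E φ len v0 vtx)
    (hf : ∀ z, ERel E φ z (f z)) {a : InvLim V φ} {p : ℕ} (hp : 0 < p)
    (hasym : ∀ n, ∀ᶠ k in atTop, (f^[k] a).1 n = (f^[k] (f^[p] a)).1 n) : f^[p] a = a := by
  have hv : ∀ n, ∀ᶠ k in atTop, (f^[k] a).1 n = v0 n := fun n =>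
    h.eventually_coord_eq_v0 hf hp (M := n + p + 1) (by omega)
      ((hasym _).mono fun k hk => by rwa [Function.iterate_add_apply])
  have hv' : ∀ n, ∀ᶠ k in atTop, (f^[k] (f^[p] a)).1 n = v0 n := fun n =>
    ((tendsto_add_atTop_nat p).eventually (hv n)).mono fun k hk => by
      rwa [← Function.iterate_add_apply]
  exact Subtype.ext <| funext fun n =>
    (h.coord_eq_v0_of_eventually hf hv' n).trans (h.coord_eq_v0_of_eventually hf hv n).symm

end IsCircuitTower

lemma compactSpace_invLim {V : ℕ → Type*} [∀ n, TopologicalSpace (V n)]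
    [∀ n, DiscreteTopology (V n)] [∀ n, CompactSpace (V n)] (φ : ∀ n, V (n + 1) → V n) :
    CompactSpace (InvLim V φ) := by
  refine isCompact_iff_compactSpace.mp
    (IsClosed.isCompact (s := {x : ∀ n, V n | ∀ n, φ n (x (n + 1)) = x n}) ?_)
  rw [Set.ofPred_forall]
  exact isClosed_iInter fun n =>
    isClosed_eq (continuous_of_discreteTopology.comp (continuous_apply _)) (continuous_apply n)

/-- The fibres of `π` form an open cover of `X`; pairs closer than its Lebesgue number have the same
image. -/
lemma limsup_dist_pos_of_frequently_ne {X D : Type*} [MetricSpace X] [CompactSpace X]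
    [TopologicalSpace D] [DiscreteTopology D] {π : X → D} (hπ : Continuous π) {u w : ℕ → X}
    (h : ∃ᶠ k in atTop, π (u k) ≠ π (w k)) : 0 < limsup (fun k => dist (u k) (w k)) atTop := by
  obtain ⟨δ, hδ, hball⟩ := lebesgue_number_lemma_of_metric (isCompact_univ (X := X))
    (c := fun d : D => π ⁻¹' {d}) (fun d => (isOpen_discrete _).preimage hπ)
    (fun x _ => Set.mem_iUnion.mpr ⟨π x, rfl⟩)
  have hfar : ∃ᶠ k in atTop, δ ≤ dist (u k) (w k) := h.mono fun k hk => by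
    by_contra! hlt
    obtain ⟨d, hd⟩ := hball (u k) (Set.mem_univ _)
    exact hk ((hd (Metric.mem_ball_self hδ)).trans
      (hd (Metric.mem_ball.mpr (by rwa [dist_comm]))).symm)
  obtain ⟨C, hC⟩ := Metric.isBounded_iff.mp (isCompact_univ (X := X)).isBounded
  exact hδ.trans_le (le_limsup_of_frequently_le hfar
    (isBoundedUnder_of ⟨C, fun k => hC (Set.mem_univ _) (Set.mem_univ _)⟩))

lemma limsup_mdist_pos_of_frequently_ne {X D : Type*} [t : TopologicalSpace X] [CompactSpace X]
    [TopologicalSpace D] [DiscreteTopology D] (m : MetricSpace X) (hm : mtop m = t) {π : X → D}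
    (hπ : Continuous π) {u w : ℕ → X} (h : ∃ᶠ k in atTop, π (u k) ≠ π (w k)) :
    0 < limsup (fun k => mdist m (u k) (w k)) atTop := by
  subst hm
  exact @limsup_dist_pos_of_frequently_ne X D m ‹_› _ _ π hπ u w h

lemma Equiv.Perm.exists_pos_iterate_eq_of_zpow_apply_eq {α : Type*} (g : Equiv.Perm α) {d : ℤ}
    (hd : d ≠ 0) {x y : α} (h : (g ^ d) x = y) : ∃ p, 0 < p ∧ (g^[p] x = y ∨ g^[p] y = x) := by
  obtain ⟨p, rfl | rfl⟩ := Int.eq_nat_or_neg d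
  · refine ⟨p, by omega, Or.inl ?_⟩
    rwa [zpow_natCast, Equiv.Perm.coe_pow] at h
  · refine ⟨p, by omega, Or.inr ?_⟩
    rw [zpow_neg, zpow_natCast, Equiv.Perm.inv_eq_iff_eq] at h
    rw [← Equiv.Perm.coe_pow, h]

theorem stmt16_general
    (V : ℕ → Type) [∀ n, TopologicalSpace (V n)] [∀ n, DiscreteTopology (V n)]
    [∀ n, Fintype (V n)]
    (E : ∀ n, V n → V n → Prop) (φ : ∀ n, V (n + 1) → V n)
    (len : ℕ → ℕ → ℕ) (v0 : ∀ n, V n) (vtx : ∀ n, ℕ → ℕ → V n)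
    (hV0 : ∀ u : V 0, u = v0 0)
    (hends : ∀ n i, 1 ≤ i → i ≤ n → vtx n i 0 = v0 n ∧ vtx n i (len n i) = v0 n)
    (hlen2 : ∀ n i, 1 ≤ i → i ≤ n → 2 ≤ len n i)
    (hrec : ∀ n i, 1 ≤ i → i ≤ n →
      len (n + 1) i = 2 + 2 * ∑ j ∈ Finset.Icc i n, len n j)
    (hne : ∀ n i j, 1 ≤ i → i ≤ n → 0 < j → j < len n i → vtx n i j ≠ v0 n)
    (hinj : ∀ n i j i' j', 1 ≤ i → i ≤ n → 1 ≤ i' → i' ≤ n →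
      0 < j → j < len n i → 0 < j' → j' < len n i' →
      vtx n i j = vtx n i' j' → i = i' ∧ j = j')
    (hall : ∀ n, 1 ≤ n → ∀ u : V n,
      u = v0 n ∨ ∃ i j, 1 ≤ i ∧ i ≤ n ∧ 0 < j ∧ j < len n i ∧ u = vtx n i j)
    (hE : ∀ n, 1 ≤ n → ∀ u v : V n, E n u v ↔
      (u = v0 n ∧ v = v0 n) ∨
      ∃ i j, 1 ≤ i ∧ i ≤ n ∧ j < len n i ∧ u = vtx n i j ∧ v = vtx n i (j + 1))
    (hphi0 : ∀ n, φ n (v0 (n + 1)) = v0 n)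
    (hphitop : ∀ n j, j ≤ len (n + 1) (n + 1) → φ n (vtx (n + 1) (n + 1) j) = v0 n)
    (hphiwalk : ∀ n i, 1 ≤ i → i ≤ n →
      List.map (φ n) (circList (vtx (n + 1)) i (len (n + 1) i)) =
        v0 n :: (((List.range' i (n + 1 - i)).flatMap fun k =>
          circList (vtx n) k (len n k) ++ circList (vtx n) k (len n k)) ++ [v0 n]))
    (f : InvLim V φ ≃ₜ InvLim V φ)
    (hf : ∀ x y : InvLim V φ, ERel E φ x y ↔ f x = y)
    (m : MetricSpace (InvLim V φ))
    (hm : mtop m = (inferInstance : TopologicalSpace (InvLim V φ))) :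
    ∀ x y : InvLim V φ, x ≠ y → ∀ d : ℤ, d ≠ 0 →
      ((f.toEquiv : Equiv.Perm (InvLim V φ)) ^ d) x = y →
      0 < Filter.limsup (fun k => mdist m ((⇑f)^[k] x) ((⇑f)^[k] y)) Filter.atTop := by
  intro x y hxy d hd horb
  have h : IsCircuitTower E φ len v0 vtx :=
    ⟨hV0, hends, hlen2, hrec, hne, hinj, hall, hE, hphi0, hphitop, hphiwalk⟩
  have hf' : ∀ z, ERel E φ z (f z) := fun z => (hf z (f z)).mpr rfl
  have hfreq : ∃ n, ∃ᶠ k in atTop, ((⇑f)^[k] x).1 n ≠ ((⇑f)^[k] y).1 n := by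
    by_contra! hasym
    obtain ⟨p, hp, rfl | rfl⟩ := Equiv.Perm.exists_pos_iterate_eq_of_zpow_apply_eq f.toEquiv hd horb
    · exact hxy (h.iterate_eq_self_of_eventually_coord_eq hf' hp hasym).symm
    · exact hxy (h.iterate_eq_self_of_eventually_coord_eq hf' hp fun n =>
        (hasym n).mono fun _ hk => hk.symm)
  obtain ⟨n, hn⟩ := hfreq
  have := compactSpace_invLim φ
  exact limsup_mdist_pos_of_frequently_ne m hm
    ((continuous_apply n).comp continuous_subtype_val) hn

theorem stmt16
    (V : ℕ → Type) [∀ n, TopologicalSpace (V n)] [∀ n, DiscreteTopology (V n)]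
    [∀ n, Fintype (V n)]
    (E : ∀ n, V n → V n → Prop) (φ : ∀ n, V (n + 1) → V n)
    (len : ℕ → ℕ → ℕ) (v0 : ∀ n, V n) (vtx : ∀ n, ℕ → ℕ → V n)
    (hV0 : ∀ u : V 0, u = v0 0)
    (hE0 : ∀ u v : V 0, E 0 u v ↔ u = v0 0 ∧ v = v0 0)
    (hends : ∀ n i, 1 ≤ i → i ≤ n → vtx n i 0 = v0 n ∧ vtx n i (len n i) = v0 n)
    (hlen2 : ∀ n i, 1 ≤ i → i ≤ n → 2 ≤ len n i)
    (hrec : ∀ n i, 1 ≤ i → i ≤ n →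
      len (n + 1) i = 2 + 2 * ∑ j ∈ Finset.Icc i n, len n j)
    (hne : ∀ n i j, 1 ≤ i → i ≤ n → 0 < j → j < len n i → vtx n i j ≠ v0 n)
    (hinj : ∀ n i j i' j', 1 ≤ i → i ≤ n → 1 ≤ i' → i' ≤ n →
      0 < j → j < len n i → 0 < j' → j' < len n i' →
      vtx n i j = vtx n i' j' → i = i' ∧ j = j')
    (hall : ∀ n, 1 ≤ n → ∀ u : V n,
      u = v0 n ∨ ∃ i j, 1 ≤ i ∧ i ≤ n ∧ 0 < j ∧ j < len n i ∧ u = vtx n i j)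
    (hE : ∀ n, 1 ≤ n → ∀ u v : V n, E n u v ↔
      (u = v0 n ∧ v = v0 n) ∨
      ∃ i j, 1 ≤ i ∧ i ≤ n ∧ j < len n i ∧ u = vtx n i j ∧ v = vtx n i (j + 1))
    (hphi0 : ∀ n, φ n (v0 (n + 1)) = v0 n)
    (hphitop : ∀ n j, j ≤ len (n + 1) (n + 1) → φ n (vtx (n + 1) (n + 1) j) = v0 n)
    (hphiwalk : ∀ n i, 1 ≤ i → i ≤ n →
      List.map (φ n) (circList (vtx (n + 1)) i (len (n + 1) i)) =
        v0 n :: (((List.range' i (n + 1 - i)).flatMap fun k =>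
          circList (vtx n) k (len n k) ++ circList (vtx n) k (len n k)) ++ [v0 n]))
    (hcov : ∀ n, IsCover (E (n + 1)) (E n) (φ n))
    (f : InvLim V φ ≃ₜ InvLim V φ)
    (hf : ∀ x y : InvLim V φ, ERel E φ x y ↔ f x = y)
    (m : MetricSpace (InvLim V φ))
    (hm : mtop m = (inferInstance : TopologicalSpace (InvLim V φ))) :
    ∀ x y : InvLim V φ, x ≠ y → ∀ d : ℤ, d ≠ 0 →
      ((f.toEquiv : Equiv.Perm (InvLim V φ)) ^ d) x = y →
      0 < Filter.limsup (fun k => mdist m ((⇑f)^[k] x) ((⇑f)^[k] y)) Filter.atTop :=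
  stmt16_general V E φ len v0 vtx hV0 hends hlen2 hrec hne hinj hall hE hphi0 hphitop hphiwalk f hf
    m hm
end

section
/- In the Cantor system (X,f) of the construction, if x ≠ y are points of X with deg(x) = deg(y) < ∞, then limsup_{k→∞} d(f^k(x), f^k(y)) > 0. -/
open Filter Topology
open scoped ENNReal

section MetricPart
variable (V : ℕ → Type) [∀ n, TopologicalSpace (V n)] [∀ n, DiscreteTopology (V n)]
  [∀ n, Fintype (V n)] (φ : ∀ n, V (n + 1) → V n)

lemma invlim_compact : CompactSpace (InvLim V φ) := by
  have hclosed : IsClosed {a : ∀ n, V n | ∀ n, φ n (a (n + 1)) = a n} := by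
    have : {a : ∀ n, V n | ∀ n, φ n (a (n + 1)) = a n}
        = ⋂ n, {a : ∀ n, V n | φ n (a (n + 1)) = a n} := by
      ext a; simp [Set.mem_iInter]
    rw [this]
    refine isClosed_iInter fun n => ?_
    exact isClosed_eq ((continuous_of_discreteTopology).comp (continuous_apply (n + 1)))
      (continuous_apply n)
  exact isCompact_iff_compactSpace.mp hclosed.isCompact

lemma freq_ne_limsup_pos
    (m : MetricSpace (InvLim V φ))
    (hm : mtop m = (inferInstance : TopologicalSpace (InvLim V φ)))
    (x y : ℕ → InvLim V φ) (N : ℕ)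
    (hfreq : ∀ K, ∃ k, K ≤ k ∧ (x k).1 N ≠ (y k).1 N) :
    0 < Filter.limsup (fun k => mdist m (x k) (y k)) Filter.atTop := by
  classical
  have hcs : CompactSpace (InvLim V φ) := invlim_compact V φ
  have hcl : IsClosed {a : InvLim V φ × InvLim V φ | a.1.1 N ≠ a.2.1 N} := by
    have hco : Continuous (fun p : InvLim V φ × InvLim V φ =>
        ((p.1.1 N : V N), (p.2.1 N : V N))) := by
      refine Continuous.prodMk ?_ ?_
      · exact ((continuous_apply N).comp continuous_subtype_val).comp continuous_fst
      · exact ((continuous_apply N).comp continuous_subtype_val).comp continuous_snd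
    exact (isClosed_discrete {q : V N × V N | q.1 ≠ q.2}).preimage hco
  -- switch to the metric topology
  letI : MetricSpace (InvLim V φ) := m
  letI tII : TopologicalSpace (InvLim V φ) := mtop m
  haveI hcsm : CompactSpace (InvLim V φ) := by
    show @CompactSpace (InvLim V φ) (mtop m)
    rw [hm]; exact hcs
  have hclm : IsClosed {a : InvLim V φ × InvLim V φ | a.1.1 N ≠ a.2.1 N} := by
    show @IsClosed _ (@instTopologicalSpaceProd _ _ (mtop m) (mtop m)) _
    rw [hm]; exact hcl
  set s := {a : InvLim V φ × InvLim V φ | a.1.1 N ≠ a.2.1 N} with hs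
  have hscompact : IsCompact s := hclm.isCompact
  have hF : Continuous (fun p : InvLim V φ × InvLim V φ => dist p.1 p.2) := continuous_dist
  have hsne : s.Nonempty := by
    obtain ⟨k, _, hk⟩ := hfreq 0
    exact ⟨(x k, y k), hk⟩
  obtain ⟨p₀, hp₀s, hp₀min⟩ := hscompact.exists_isMinOn hsne hF.continuousOn
  have hmd : ∀ a b : InvLim V φ, mdist m a b = dist a b := fun a b => rfl
  have hεpos : 0 < dist p₀.1 p₀.2 := by
    have hne : p₀.1 ≠ p₀.2 := by
      intro h; exact hp₀s (by simp only [hs, Set.mem_setOf_eq, h, not_ne_iff])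
    exact dist_pos.mpr hne
  obtain ⟨pM, _, hpM⟩ := isCompact_univ.exists_isMaxOn
    ⟨(x 0, y 0), trivial⟩ hF.continuousOn
  have hbdd : Filter.IsBoundedUnder (· ≤ ·) Filter.atTop (fun k => mdist m (x k) (y k)) := by
    exact Filter.isBoundedUnder_of ⟨dist pM.1 pM.2, fun k =>
      hpM (a := (x k, y k)) trivial⟩
  have hfreq' : ∃ᶠ k in Filter.atTop, dist p₀.1 p₀.2 ≤ mdist m (x k) (y k) := by
    rw [Filter.frequently_atTop]
    intro K
    obtain ⟨k, hkK, hk⟩ := hfreq K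
    exact ⟨k, hkK, hp₀min (a := (x k, y k)) hk⟩
  calc (0 : ℝ) < dist p₀.1 p₀.2 := hεpos
    _ ≤ _ := Filter.le_limsup_of_frequently_le hfreq' hbdd

end MetricPart

section Proj
variable {V : ℕ → Type} (φ : ∀ n, V (n + 1) → V n)

def projD (b : ℕ) : ∀ k, V (b + k) → V b
  | 0, v => v
  | k + 1, v => projD b k (φ (b + k) v)

lemma projD_v0 (v0 : ∀ n, V n) (hphi0 : ∀ n, φ n (v0 (n + 1)) = v0 n) (b : ℕ) :
    ∀ k, projD φ b k (v0 (b + k)) = v0 b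
  | 0 => rfl
  | k + 1 => by
      show projD φ b k (φ (b + k) (v0 (b + k + 1))) = v0 b
      rw [hphi0 (b + k)]; exact projD_v0 v0 hphi0 b k

lemma projD_compat (x : InvLim V φ) (b : ℕ) : ∀ k, projD φ b k (x.1 (b + k)) = x.1 b
  | 0 => rfl
  | k + 1 => by
      show projD φ b k (φ (b + k) (x.1 (b + k + 1))) = x.1 b
      rw [x.2 (b + k)]; exact projD_compat x b k

end Proj

section Walk
variable {V : ℕ → Type} (φ : ∀ n, V (n + 1) → V n)
  (len : ℕ → ℕ → ℕ) (v0 : ∀ n, V n) (vtx : ∀ n, ℕ → ℕ → V n)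

/-- the doubled-circuits part of the image walk of a circuit -/
def Wl (ℓ i : ℕ) : List (V ℓ) :=
  (List.range' i (ℓ + 1 - i)).flatMap fun k =>
    circList (vtx ℓ) k (len ℓ k) ++ circList (vtx ℓ) k (len ℓ k)

lemma circList_get (ℓ r s : ℕ) (h : s < len ℓ r) :
    (circList (vtx ℓ) r (len ℓ r))[s]? = some (vtx ℓ r s) := by
  rw [circList, List.getElem?_ofFn]
  simp [List.ofFnNthVal, h]

lemma circList_len (ℓ r : ℕ) : (circList (vtx ℓ) r (len ℓ r)).length = len ℓ r :=
  List.length_ofFn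

lemma Wl_peel (ℓ i : ℕ) (h : i ≤ ℓ) :
    Wl len vtx ℓ i = (circList (vtx ℓ) i (len ℓ i) ++ circList (vtx ℓ) i (len ℓ i))
      ++ Wl len vtx ℓ (i + 1) := by
  have h1 : ℓ + 1 - i = (ℓ - i) + 1 := by omega
  have h2 : ℓ + 1 - (i + 1) = ℓ - i := by omega
  rw [Wl, Wl, h1, h2, List.range'_succ, List.flatMap_cons]

lemma Wl_length (ℓ : ℕ) : ∀ (a i : ℕ), i + a = ℓ →
    (Wl len vtx ℓ i).length = 2 * ∑ t ∈ Finset.Ico i (ℓ + 1), len ℓ t := by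
  intro a
  induction a with
  | zero =>
      intro i hi
      have hir : i = ℓ := by omega
      subst hir
      rw [Wl_peel len vtx i i le_rfl]
      have : Wl len vtx i (i + 1) = [] := by
        rw [Wl]; simp
      rw [this]
      have hs : Finset.Ico i (i + 1) = {i} := by
        rw [Finset.Ico_add_one_right_eq_Icc, Finset.Icc_self]
      simp [hs, circList, Nat.two_mul]
  | succ a ih =>
      intro i hi
      have hile : i ≤ ℓ := by omega
      rw [Wl_peel len vtx ℓ i hile]
      have h2 : i + 1 + a = ℓ := by omega
      simp only [List.length_append, ih (i + 1) h2, circList_len]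
      rw [Finset.sum_eq_sum_Ico_succ_bot (by omega : i < ℓ + 1)]
      ring

lemma Wl_get (ℓ : ℕ) : ∀ (a i r c s : ℕ), i + a = r → r ≤ ℓ → c ≤ 1 → s < len ℓ r →
    (Wl len vtx ℓ i)[(2 * ∑ t ∈ Finset.Ico i r, len ℓ t + c * len ℓ r + s)]?
      = some (vtx ℓ r s) := by
  intro a
  induction a with
  | zero =>
      intro i r c s hi hr hc hs
      have hir : i = r := by omega
      subst hir
      rw [Wl_peel len vtx ℓ i (by omega)]
      have hico : Finset.Ico i i = ∅ := by simp
      rw [hico]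
      simp only [Finset.sum_empty, Nat.mul_zero, Nat.zero_add]
      interval_cases c
      · rw [List.getElem?_append_left
          (by simp only [List.length_append, circList_len]; omega)]
        rw [List.getElem?_append_left (by simp only [circList_len]; omega)]
        simpa using circList_get len vtx ℓ i s hs
      · rw [List.getElem?_append_left
          (by simp only [List.length_append, circList_len]; omega)]
        rw [List.getElem?_append_right (by simp only [circList_len]; omega)]
        rw [circList_len]
        have h1s : 1 * len ℓ i + s - len ℓ i = s := by omega
        rw [h1s]
        exact circList_get len vtx ℓ i s hs
  | succ a ih =>
      intro i r c s hi hr hc hs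
      have hile : i ≤ ℓ := by omega
      rw [Wl_peel len vtx ℓ i hile]
      rw [List.getElem?_append_right (by
        simp only [List.length_append, circList_len]
        rw [Finset.sum_eq_sum_Ico_succ_bot (by omega : i < r)]
        omega)]
      have hlen : (circList (vtx ℓ) i (len ℓ i) ++ circList (vtx ℓ) i (len ℓ i)).length
          = 2 * len ℓ i := by simp only [List.length_append, circList_len]; ring
      rw [hlen]
      rw [Finset.sum_eq_sum_Ico_succ_bot (by omega : i < r)]
      have harith : 2 * (len ℓ i + ∑ t ∈ Finset.Ico (i+1) r, len ℓ t) + c * len ℓ r + s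
          - 2 * len ℓ i = 2 * ∑ t ∈ Finset.Ico (i+1) r, len ℓ t + c * len ℓ r + s := by
        omega
      rw [harith]
      exact ih (i + 1) r c s (by omega) hr hc hs

end Walk

section Phi
variable {V : ℕ → Type} (φ : ∀ n, V (n + 1) → V n)
  (len : ℕ → ℕ → ℕ) (v0 : ∀ n, V n) (vtx : ∀ n, ℕ → ℕ → V n)
  (hends : ∀ n i, 1 ≤ i → i ≤ n → vtx n i 0 = v0 n ∧ vtx n i (len n i) = v0 n)
  (hrec : ∀ n i, 1 ≤ i → i ≤ n →
      len (n + 1) i = 2 + 2 * ∑ j ∈ Finset.Icc i n, len n j)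
  (hphi0 : ∀ n, φ n (v0 (n + 1)) = v0 n)
  (hphiwalk : ∀ n i, 1 ≤ i → i ≤ n →
      List.map (φ n) (circList (vtx (n + 1)) i (len (n + 1) i)) =
        v0 n :: (((List.range' i (n + 1 - i)).flatMap fun k =>
          circList (vtx n) k (len n k) ++ circList (vtx n) k (len n k)) ++ [v0 n]))

include hrec in
lemma lenIco (ℓ i : ℕ) (h1 : 1 ≤ i) (h2 : i ≤ ℓ) :
    len (ℓ + 1) i = 2 + 2 * ∑ t ∈ Finset.Ico i (ℓ + 1), len ℓ t := by
  rw [hrec ℓ i h1 h2, Finset.Ico_add_one_right_eq_Icc]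

include hphiwalk in
lemma phi_get (ℓ i : ℕ) (h1 : 1 ≤ i) (h2 : i ≤ ℓ) (j : ℕ) (hj : j < len (ℓ + 1) i) :
    some (φ ℓ (vtx (ℓ + 1) i j)) = (v0 ℓ :: (Wl len vtx ℓ i ++ [v0 ℓ]))[j]? := by
  have h := hphiwalk ℓ i h1 h2
  have hL : (List.map (φ ℓ) (circList (vtx (ℓ + 1)) i (len (ℓ + 1) i)))[j]?
      = some (φ ℓ (vtx (ℓ + 1) i j)) := by
    rw [List.getElem?_map, circList_get len vtx (ℓ + 1) i j hj]
    rfl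
  rw [← hL, h]
  rfl

include hrec hphiwalk in
lemma phi_vtx_0 (ℓ i : ℕ) (h1 : 1 ≤ i) (h2 : i ≤ ℓ) :
    φ ℓ (vtx (ℓ + 1) i 0) = v0 ℓ := by
  have h0 : 0 < len (ℓ + 1) i := by
    rw [lenIco len hrec ℓ i h1 h2]; omega
  have := phi_get φ len v0 vtx hphiwalk ℓ i h1 h2 0 h0
  simp only [List.getElem?_cons_zero] at this
  exact Option.some_injective _ this

include hrec hphiwalk in
lemma phi_vtx_block (ℓ i r c s : ℕ) (h1 : 1 ≤ i) (h2 : i ≤ ℓ) (hir : i ≤ r) (hr : r ≤ ℓ)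
    (hc : c ≤ 1) (hs : s < len ℓ r) (j : ℕ)
    (hj : j = 2 * ∑ t ∈ Finset.Ico i r, len ℓ t + c * len ℓ r + s + 1) :
    φ ℓ (vtx (ℓ + 1) i j) = vtx ℓ r s := by
  subst hj
  have hsplit : ∑ t ∈ Finset.Ico i (ℓ + 1), len ℓ t
      = ∑ t ∈ Finset.Ico i r, len ℓ t + (len ℓ r + ∑ t ∈ Finset.Ico (r + 1) (ℓ + 1), len ℓ t) := by
    rw [← Finset.sum_Ico_consecutive (fun t => len ℓ t) hir (by omega : r ≤ ℓ + 1)]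
    rw [Finset.sum_eq_sum_Ico_succ_bot (by omega : r < ℓ + 1)]
  have hjlt : 2 * ∑ t ∈ Finset.Ico i r, len ℓ t + c * len ℓ r + s + 1 < len (ℓ + 1) i := by
    rw [lenIco len hrec ℓ i h1 h2, hsplit]
    have : c * len ℓ r ≤ len ℓ r := by
      calc c * len ℓ r ≤ 1 * len ℓ r := Nat.mul_le_mul_right _ hc
        _ = len ℓ r := by ring
    omega
  have h := phi_get φ len v0 vtx hphiwalk ℓ i h1 h2 _ hjlt
  rw [List.getElem?_cons_succ] at h
  rw [List.getElem?_append_left (by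
    rw [Wl_length len vtx ℓ (ℓ - i) i (by omega), hsplit]
    have : c * len ℓ r ≤ len ℓ r := by
      calc c * len ℓ r ≤ 1 * len ℓ r := Nat.mul_le_mul_right _ hc
        _ = len ℓ r := by ring
    omega)] at h
  rw [Wl_get len vtx ℓ (r - i) i r c s (by omega) hr hc hs] at h
  exact Option.some_injective _ h

include hrec hphiwalk in
lemma phi_vtx_end (ℓ i : ℕ) (h1 : 1 ≤ i) (h2 : i ≤ ℓ) :
    φ ℓ (vtx (ℓ + 1) i (len (ℓ + 1) i - 1)) = v0 ℓ := by
  have hlen : (Wl len vtx ℓ i).length = 2 * ∑ t ∈ Finset.Ico i (ℓ + 1), len ℓ t :=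
    Wl_length len vtx ℓ (ℓ - i) i (by omega)
  have hLi : len (ℓ + 1) i = 2 + 2 * ∑ t ∈ Finset.Ico i (ℓ + 1), len ℓ t :=
    lenIco len hrec ℓ i h1 h2
  have hj : (Wl len vtx ℓ i).length + 1 < len (ℓ + 1) i := by omega
  have h := phi_get φ len v0 vtx hphiwalk ℓ i h1 h2 _ hj
  rw [List.getElem?_cons_succ, List.getElem?_concat_length] at h
  have h' := Option.some_injective _ h
  rw [show len (ℓ + 1) i - 1 = (Wl len vtx ℓ i).length + 1 by omega]
  exact h'

include hends hphi0 in
lemma phi_vtx_len (ℓ i : ℕ) (h1 : 1 ≤ i) (h2 : i ≤ ℓ + 1) :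
    φ ℓ (vtx (ℓ + 1) i (len (ℓ + 1) i)) = v0 ℓ := by
  rw [(hends (ℓ + 1) i h1 h2).2, hphi0]

include hrec in
lemma decode (ℓ : ℕ) : ∀ (a i : ℕ), i + a = ℓ → 1 ≤ i → ∀ j, 1 ≤ j → j < len (ℓ + 1) i - 1 →
    ∃ r c s, i ≤ r ∧ r ≤ ℓ ∧ c ≤ 1 ∧ s < len ℓ r ∧
      j = 1 + (2 * ∑ t ∈ Finset.Ico i r, len ℓ t + c * len ℓ r + s) := by
  intro a
  induction a with
  | zero =>
      intro i hi h1 j hj1 hj2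
      have hir : i = ℓ := by omega
      subst hir
      rw [lenIco len hrec i i h1 le_rfl] at hj2
      have hsing : Finset.Ico i (i + 1) = {i} := by
        rw [Finset.Ico_add_one_right_eq_Icc, Finset.Icc_self]
      rw [hsing, Finset.sum_singleton] at hj2
      by_cases hcase : j - 1 < len i i
      · refine ⟨i, 0, j - 1, le_rfl, le_rfl, by omega, hcase, ?_⟩
        have hico : Finset.Ico i i = ∅ := by simp
        rw [hico]
        simp only [Finset.sum_empty]
        omega
      · refine ⟨i, 1, j - 1 - len i i, le_rfl, le_rfl, le_rfl, by omega, ?_⟩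
        have hico : Finset.Ico i i = ∅ := by simp
        rw [hico]
        simp only [Finset.sum_empty]
        omega
  | succ a ih =>
      intro i hi h1 j hj1 hj2
      rw [lenIco len hrec ℓ i h1 (by omega)] at hj2
      rw [Finset.sum_eq_sum_Ico_succ_bot (by omega : i < ℓ + 1)] at hj2
      by_cases hcase : j - 1 < 2 * len ℓ i
      · by_cases hcase2 : j - 1 < len ℓ i
        · refine ⟨i, 0, j - 1, le_rfl, by omega, by omega, hcase2, ?_⟩
          have : Finset.Ico i i = ∅ := by simp
          rw [this]
          simp only [Finset.sum_empty]
          omega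
        · refine ⟨i, 1, j - 1 - len ℓ i, le_rfl, by omega, le_rfl, by omega, ?_⟩
          have : Finset.Ico i i = ∅ := by simp
          rw [this]
          simp only [Finset.sum_empty]
          omega
      · have hj2' : j - 2 * len ℓ i < len (ℓ + 1) (i + 1) - 1 := by
          rw [lenIco len hrec ℓ (i + 1) (by omega) (by omega)]
          omega
        obtain ⟨r, c, s, hr1, hr2, hc, hs, heq⟩ :=
          ih (i + 1) (by omega) (by omega) (j - 2 * len ℓ i) (by omega) hj2'
        refine ⟨r, c, s, by omega, hr2, hc, hs, ?_⟩
        rw [Finset.sum_eq_sum_Ico_succ_bot (by omega : i < r)]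
        omega

end Phi

section Word
variable {V : ℕ → Type} (φ : ∀ n, V (n + 1) → V n)
  (len : ℕ → ℕ → ℕ) (v0 : ∀ n, V n) (vtx : ∀ n, ℕ → ℕ → V n) (n : ℕ)

/-- length of the all-`v0` block at the end of the level-`ℓ` walk, seen from level `n` -/
def Gam (ℓ : ℕ) : ℕ := 2 * ∑ j ∈ Finset.Icc (n + 1) ℓ, len ℓ j + 1

/-- suffix run length `S(n+w)` -/
def Sf : ℕ → ℕ
  | 0 => 0
  | w + 1 => Sf w + Gam len n (n + w)

/-- middle-run bound `J(n+w-1)+1` at scale `w` -/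
def cbnd : ℕ → ℕ
  | 0 => 0
  | w + 1 => Sf len n w + (w + 1)

/-- the projection to level `n` of the vertices of circuit `i` at level `n+w` -/
def Bw (w i j : ℕ) : V n := projD φ n w (vtx (n + w) i j)

lemma Bw_succ (w i j : ℕ) :
    Bw φ vtx n (w + 1) i j = projD φ n w (φ (n + w) (vtx (n + w + 1) i j)) := rfl

lemma Bw_phi (w i j r s : ℕ) (h : φ (n + w) (vtx (n + w + 1) i j) = vtx (n + w) r s) :
    Bw φ vtx n (w + 1) i j = Bw φ vtx n w r s := by
  rw [Bw_succ, h]; rfl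

lemma Bw_phi_v0 (hphi0 : ∀ k, φ k (v0 (k + 1)) = v0 k) (w i j : ℕ)
    (h : φ (n + w) (vtx (n + w + 1) i j) = v0 (n + w)) :
    Bw φ vtx n (w + 1) i j = v0 n := by
  rw [Bw_succ, h]
  exact projD_v0 φ v0 hphi0 n w

variable (hlen2 : ∀ k i, 1 ≤ i → i ≤ k → 2 ≤ len k i)
  (hrec : ∀ k i, 1 ≤ i → i ≤ k →
      len (k + 1) i = 2 + 2 * ∑ j ∈ Finset.Icc i k, len k j)
  (hn1 : 1 ≤ n)

include hlen2 hn1 in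
lemma Gam_lb (w : ℕ) : 4 * w + 1 ≤ Gam len n (n + w) := by
  have hcard : (Finset.Icc (n + 1) (n + w)).card = w := by
    rw [Nat.card_Icc]; omega
  have hsum : (Finset.Icc (n + 1) (n + w)).card • 2 ≤ ∑ j ∈ Finset.Icc (n + 1) (n + w), len (n + w) j := by
    refine Finset.card_nsmul_le_sum _ _ _ fun x hx => ?_
    rw [Finset.mem_Icc] at hx
    exact hlen2 (n + w) x (by omega) (by omega)
  rw [hcard, smul_eq_mul] at hsum
  rw [Gam]
  omega

include hlen2 hn1 in
lemma Gam_Ico (w : ℕ) : Gam len n (n + w) = 2 * ∑ j ∈ Finset.Ico (n + 1) (n + w + 1), len (n + w) j + 1 := by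
  rw [Gam, Finset.Ico_add_one_right_eq_Icc]

include hlen2 hrec hn1 in
lemma len_lb (w : ℕ) : ∀ i, 1 ≤ i → i ≤ n → Sf len n w + w + 2 ≤ len (n + w) i := by
  induction w with
  | zero =>
      intro i h1 h2
      have := hlen2 n i h1 h2
      simp only [Sf, Nat.add_zero]
      omega
  | succ w ih =>
      intro i h1 h2
      have hn' : len (n + w + 1) i = 2 + 2 * ∑ t ∈ Finset.Ico i (n + w + 1), len (n + w) t :=
        lenIco len hrec (n + w) i h1 (by omega)
      have hsplit : ∑ t ∈ Finset.Ico i (n + w + 1), len (n + w) t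
          = ∑ t ∈ Finset.Ico i n, len (n + w) t + (len (n + w) n
            + ∑ t ∈ Finset.Ico (n + 1) (n + w + 1), len (n + w) t) := by
        rw [← Finset.sum_Ico_consecutive (fun t => len (n + w) t) (by omega : i ≤ n)
          (by omega : n ≤ n + w + 1)]
        rw [Finset.sum_eq_sum_Ico_succ_bot (by omega : n < n + w + 1)]
      have hlenn := ih n hn1 le_rfl
      have hGam := Gam_Ico len n hlen2 hn1 w
      have hSf : Sf len n (w + 1) = Sf len n w + Gam len n (n + w) := rfl
      have : (0:ℕ) ≤ ∑ t ∈ Finset.Ico i n, len (n + w) t := Nat.zero_le _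
      rw [show n + (w + 1) = n + w + 1 by omega, hn', hsplit, hSf]
      omega

include hlen2 hn1 in
lemma cbnd_le_Sf (w : ℕ) : cbnd len n w ≤ Sf len n w := by
  cases w with
  | zero => simp [cbnd, Sf]
  | succ w =>
      have := Gam_lb len n hlen2 hn1 w
      have hSf : Sf len n (w + 1) = Sf len n w + Gam len n (n + w) := rfl
      have hcb : cbnd len n (w + 1) = Sf len n w + (w + 1) := rfl
      omega

include hlen2 hn1 in
lemma cbnd_mono (w : ℕ) : cbnd len n w ≤ cbnd len n (w + 1) := by
  cases w with
  | zero => simp [cbnd]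
  | succ w =>
      have hSf : Sf len n (w + 1) = Sf len n w + Gam len n (n + w) := rfl
      have := Gam_lb len n hlen2 hn1 w
      have hcb1 : cbnd len n (w + 1) = Sf len n w + (w + 1) := rfl
      have hcb2 : cbnd len n (w + 1 + 1) = Sf len n (w + 1) + (w + 1 + 1) := rfl
      omega

end Word

section WordStep
variable {V : ℕ → Type} (φ : ∀ n, V (n + 1) → V n)
  (len : ℕ → ℕ → ℕ) (v0 : ∀ n, V n) (vtx : ∀ n, ℕ → ℕ → V n) (n : ℕ)
  (hends : ∀ k i, 1 ≤ i → i ≤ k → vtx k i 0 = v0 k ∧ vtx k i (len k i) = v0 k)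
  (hlen2 : ∀ k i, 1 ≤ i → i ≤ k → 2 ≤ len k i)
  (hrec : ∀ k i, 1 ≤ i → i ≤ k →
      len (k + 1) i = 2 + 2 * ∑ j ∈ Finset.Icc i k, len k j)
  (hne : ∀ k i j, 1 ≤ i → i ≤ k → 0 < j → j < len k i → vtx k i j ≠ v0 k)
  (hphi0 : ∀ k, φ k (v0 (k + 1)) = v0 k)
  (hphitop : ∀ k j, j ≤ len (k + 1) (k + 1) → φ k (vtx (k + 1) (k + 1) j) = v0 k)
  (hphiwalk : ∀ k i, 1 ≤ i → i ≤ k →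
      List.map (φ k) (circList (vtx (k + 1)) i (len (k + 1) i)) =
        v0 k :: (((List.range' i (k + 1 - i)).flatMap fun t =>
          circList (vtx k) t (len k t) ++ circList (vtx k) t (len k t)) ++ [v0 k]))
  (hn1 : 1 ≤ n)
  (w : ℕ)
  (ha : ∀ i, 1 ≤ i → i ≤ n → ∀ j, j ≤ len (n + w) i →
      (j < w + 1 ∨ len (n + w) i - Sf len n w ≤ j) → Bw φ vtx n w i j = v0 n)
  (hb1 : ∀ i, 1 ≤ i → i ≤ n → Bw φ vtx n w i (w + 1) ≠ v0 n)
  (hb2 : ∀ i, 1 ≤ i → i ≤ n → Bw φ vtx n w i (len (n + w) i - Sf len n w - 1) ≠ v0 n)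
  (hc : ∀ i, 1 ≤ i → i ≤ n → ∀ u, w + 1 ≤ u →
      u + cbnd len n w ≤ len (n + w) i - Sf len n w - 1 →
      ∃ s, u ≤ s ∧ s ≤ u + cbnd len n w ∧ Bw φ vtx n w i s ≠ v0 n)
  (hd : ∀ i, n + 1 ≤ i → i ≤ n + w → ∀ j, j ≤ len (n + w) i → Bw φ vtx n w i j = v0 n)

include hends hlen2 hrec hphi0 hphitop hphiwalk hn1 hd in
lemma step_d : ∀ i, n + 1 ≤ i → i ≤ n + w + 1 → ∀ j, j ≤ len (n + w + 1) i →
    Bw φ vtx n (w + 1) i j = v0 n := by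
  intro i hi1 hi2 j hj
  by_cases htop : i = n + w + 1
  · subst htop
    exact Bw_phi_v0 φ v0 vtx n hphi0 w (n + w + 1) j (hphitop (n + w) j hj)
  · have hi2' : i ≤ n + w := by omega
    have hi1' : 1 ≤ i := by omega
    have hL : len (n + w + 1) i = 2 + 2 * ∑ t ∈ Finset.Ico i (n + w + 1), len (n + w) t :=
      lenIco len hrec (n + w) i hi1' hi2'
    by_cases h0 : j = 0
    · subst h0
      exact Bw_phi_v0 φ v0 vtx n hphi0 w i 0
        (phi_vtx_0 φ len v0 vtx hrec hphiwalk (n + w) i hi1' hi2')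
    by_cases hlen : j = len (n + w + 1) i
    · subst hlen
      exact Bw_phi_v0 φ v0 vtx n hphi0 w i _
        (phi_vtx_len φ len v0 vtx hends hphi0 (n + w) i hi1' (by omega))
    by_cases hend : j = len (n + w + 1) i - 1
    · subst hend
      exact Bw_phi_v0 φ v0 vtx n hphi0 w i _
        (phi_vtx_end φ len v0 vtx hrec hphiwalk (n + w) i hi1' hi2')
    · obtain ⟨r, c, s, hir, hrle, hcle, hslt, heq⟩ :=
        decode len hrec (n + w) (n + w - i) i (by omega) hi1' j (by omega) (by omega)
      have hval : φ (n + w) (vtx (n + w + 1) i j) = vtx (n + w) r s :=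
        phi_vtx_block φ len v0 vtx hrec hphiwalk (n + w) i r c s hi1' hi2' hir hrle hcle hslt
          j (by omega)
      rw [Bw_phi φ vtx n w i j r s hval]
      exact hd r (by omega) hrle s (by omega)

include hlen2 hrec hphiwalk hn1 hb1 in
lemma step_b1 : ∀ i, 1 ≤ i → i ≤ n → Bw φ vtx n (w + 1) i (w + 2) ≠ v0 n := by
  intro i h1 h2
  have hlb := len_lb len n hlen2 hrec hn1 w i h1 h2
  have hico : ∑ t ∈ Finset.Ico i i, len (n + w) t = 0 := by simp
  have hval : φ (n + w) (vtx (n + w + 1) i (w + 2)) = vtx (n + w) i (w + 1) :=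
    phi_vtx_block φ len v0 vtx hrec hphiwalk (n + w) i i 0 (w + 1) h1 (by omega) le_rfl
      (by omega) (by omega) (by omega) (w + 2) (by rw [hico]; omega)
  rw [Bw_phi φ vtx n w i (w + 2) i (w + 1) hval]
  exact hb1 i h1 h2

include hlen2 hrec hphiwalk hn1 hb2 in
lemma step_b2 : ∀ i, 1 ≤ i → i ≤ n →
    Bw φ vtx n (w + 1) i (len (n + w + 1) i - Sf len n (w + 1) - 1) ≠ v0 n := by
  intro i h1 h2
  have hlenn := len_lb len n hlen2 hrec hn1 w n hn1 le_rfl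
  have hL : len (n + w + 1) i = 2 + 2 * ∑ t ∈ Finset.Ico i (n + w + 1), len (n + w) t :=
    lenIco len hrec (n + w) i h1 (by omega)
  have hsplit : ∑ t ∈ Finset.Ico i (n + w + 1), len (n + w) t
      = ∑ t ∈ Finset.Ico i n, len (n + w) t + (len (n + w) n
        + ∑ t ∈ Finset.Ico (n + 1) (n + w + 1), len (n + w) t) := by
    rw [← Finset.sum_Ico_consecutive (fun t => len (n + w) t) (by omega : i ≤ n)
      (by omega : n ≤ n + w + 1)]
    rw [Finset.sum_eq_sum_Ico_succ_bot (by omega : n < n + w + 1)]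
  have hGam := Gam_Ico len n hlen2 hn1 w
  have hSf : Sf len n (w + 1) = Sf len n w + Gam len n (n + w) := rfl
  have hval : φ (n + w) (vtx (n + w + 1) i (len (n + w + 1) i - Sf len n (w + 1) - 1))
      = vtx (n + w) n (len (n + w) n - Sf len n w - 1) :=
    phi_vtx_block φ len v0 vtx hrec hphiwalk (n + w) i n 1 (len (n + w) n - Sf len n w - 1)
      h1 (by omega) (by omega) (by omega) le_rfl (by omega) _ (by omega)
  rw [Bw_phi φ vtx n w i _ n _ hval]
  exact hb2 n hn1 le_rfl

include hends hlen2 hrec hphi0 hphiwalk hn1 ha hd in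
lemma step_a : ∀ i, 1 ≤ i → i ≤ n → ∀ j, j ≤ len (n + w + 1) i →
    (j < w + 2 ∨ len (n + w + 1) i - Sf len n (w + 1) ≤ j) →
    Bw φ vtx n (w + 1) i j = v0 n := by
  intro i h1 h2 j hj hdisj
  have hlenn := len_lb len n hlen2 hrec hn1 w n hn1 le_rfl
  have hleni := len_lb len n hlen2 hrec hn1 w i h1 h2
  have hL : len (n + w + 1) i = 2 + 2 * ∑ t ∈ Finset.Ico i (n + w + 1), len (n + w) t :=
    lenIco len hrec (n + w) i h1 (by omega)
  have hsplitn : ∑ t ∈ Finset.Ico i (n + w + 1), len (n + w) t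
      = ∑ t ∈ Finset.Ico i n, len (n + w) t + (len (n + w) n
        + ∑ t ∈ Finset.Ico (n + 1) (n + w + 1), len (n + w) t) := by
    rw [← Finset.sum_Ico_consecutive (fun t => len (n + w) t) (by omega : i ≤ n)
      (by omega : n ≤ n + w + 1)]
    rw [Finset.sum_eq_sum_Ico_succ_bot (by omega : n < n + w + 1)]
  have hGam := Gam_Ico len n hlen2 hn1 w
  have hSf : Sf len n (w + 1) = Sf len n w + Gam len n (n + w) := rfl
  by_cases h0 : j = 0
  · subst h0
    exact Bw_phi_v0 φ v0 vtx n hphi0 w i 0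
      (phi_vtx_0 φ len v0 vtx hrec hphiwalk (n + w) i h1 (by omega))
  rcases hdisj with hsmall | hbig
  · -- prefix zone
    have hico : ∑ t ∈ Finset.Ico i i, len (n + w) t = 0 := by simp
    have hval : φ (n + w) (vtx (n + w + 1) i j) = vtx (n + w) i (j - 1) :=
      phi_vtx_block φ len v0 vtx hrec hphiwalk (n + w) i i 0 (j - 1) h1 (by omega) le_rfl
        (by omega) (by omega) (by omega) j (by rw [hico]; omega)
    rw [Bw_phi φ vtx n w i j i (j - 1) hval]
    exact ha i h1 h2 (j - 1) (by omega) (Or.inl (by omega))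
  · -- suffix zone
    by_cases hlen : j = len (n + w + 1) i
    · subst hlen
      exact Bw_phi_v0 φ v0 vtx n hphi0 w i _
        (phi_vtx_len φ len v0 vtx hends hphi0 (n + w) i h1 (by omega))
    by_cases hend : j = len (n + w + 1) i - 1
    · subst hend
      exact Bw_phi_v0 φ v0 vtx n hphi0 w i _
        (phi_vtx_end φ len v0 vtx hrec hphiwalk (n + w) i h1 (by omega))
    obtain ⟨r, c, s, hir, hrle, hcle, hslt, heq⟩ :=
      decode len hrec (n + w) (n + w - i) i (by omega) h1 j (by omega) (by omega)
    have hTr : ∑ t ∈ Finset.Ico i (n + w + 1), len (n + w) t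
        = ∑ t ∈ Finset.Ico i r, len (n + w) t + (len (n + w) r
          + ∑ t ∈ Finset.Ico (r + 1) (n + w + 1), len (n + w) t) := by
      rw [← Finset.sum_Ico_consecutive (fun t => len (n + w) t) hir
        (by omega : r ≤ n + w + 1)]
      rw [Finset.sum_eq_sum_Ico_succ_bot (by omega : r < n + w + 1)]
    by_cases hrn : n + 1 ≤ r
    · have hval : φ (n + w) (vtx (n + w + 1) i j) = vtx (n + w) r s :=
        phi_vtx_block φ len v0 vtx hrec hphiwalk (n + w) i r c s h1 (by omega) hir hrle hcle
          hslt j (by omega)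
      rw [Bw_phi φ vtx n w i j r s hval]
      exact hd r hrn hrle s (by omega)
    · by_cases hrltn : r < n
      · exfalso
        have hsub : ∑ t ∈ Finset.Ico (r + 1) (n + w + 1), len (n + w) t
            = ∑ t ∈ Finset.Ico (r + 1) (n + 1), len (n + w) t
              + ∑ t ∈ Finset.Ico (n + 1) (n + w + 1), len (n + w) t := by
          rw [← Finset.sum_Ico_consecutive (fun t => len (n + w) t)
            (by omega : r + 1 ≤ n + 1) (by omega : n + 1 ≤ n + w + 1)]
        have hsingle : len (n + w) n ≤ ∑ t ∈ Finset.Ico (r + 1) (n + 1), len (n + w) t := by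
          refine Finset.single_le_sum (f := fun t => len (n + w) t) (fun t _ => Nat.zero_le _) ?_
          rw [Finset.mem_Ico]; omega
        rcases Nat.le_one_iff_eq_zero_or_eq_one.mp hcle with rfl | rfl <;> omega
      · have hrn' : r = n := by omega
        rw [hrn'] at heq hslt hTr hir
        rcases Nat.le_one_iff_eq_zero_or_eq_one.mp hcle with rfl | rfl
        · exfalso; omega
        · have hval : φ (n + w) (vtx (n + w + 1) i j) = vtx (n + w) n s :=
            phi_vtx_block φ len v0 vtx hrec hphiwalk (n + w) i n 1 s h1 (by omega) hir
              (by omega) le_rfl hslt j (by omega)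
          rw [Bw_phi φ vtx n w i j n s hval]
          exact ha n hn1 le_rfl s (by omega) (Or.inr (by omega))

include hlen2 hrec hphiwalk hn1 hb1 hb2 hc in
lemma step_c : ∀ i, 1 ≤ i → i ≤ n → ∀ u, w + 2 ≤ u →
    u + cbnd len n (w + 1) ≤ len (n + w + 1) i - Sf len n (w + 1) - 1 →
    ∃ s, u ≤ s ∧ s ≤ u + cbnd len n (w + 1) ∧ Bw φ vtx n (w + 1) i s ≠ v0 n := by
  intro i h1 h2 u hu1 hu2
  have hlenn := len_lb len n hlen2 hrec hn1 w n hn1 le_rfl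
  have hleni := len_lb len n hlen2 hrec hn1 w i h1 h2
  have hGlb := Gam_lb len n hlen2 hn1 w
  have hL : len (n + w + 1) i = 2 + 2 * ∑ t ∈ Finset.Ico i (n + w + 1), len (n + w) t :=
    lenIco len hrec (n + w) i h1 (by omega)
  have hsplitn : ∑ t ∈ Finset.Ico i (n + w + 1), len (n + w) t
      = ∑ t ∈ Finset.Ico i n, len (n + w) t + (len (n + w) n
        + ∑ t ∈ Finset.Ico (n + 1) (n + w + 1), len (n + w) t) := by
    rw [← Finset.sum_Ico_consecutive (fun t => len (n + w) t) (by omega : i ≤ n)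
      (by omega : n ≤ n + w + 1)]
    rw [Finset.sum_eq_sum_Ico_succ_bot (by omega : n < n + w + 1)]
  have hGam := Gam_Ico len n hlen2 hn1 w
  have hSf : Sf len n (w + 1) = Sf len n w + Gam len n (n + w) := rfl
  have hcb : cbnd len n (w + 1) = Sf len n w + (w + 1) := rfl
  have hcbm := cbnd_mono len n hlen2 hn1 w
  obtain ⟨r, c, s, hir, hrle, hcle, hslt, heq⟩ :=
    decode len hrec (n + w) (n + w - i) i (by omega) h1 u (by omega) (by omega)
  by_cases hrn : n + 1 ≤ r
  · exfalso
    have hsubset : ∑ t ∈ Finset.Ico i (n + 1), len (n + w) t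
        ≤ ∑ t ∈ Finset.Ico i r, len (n + w) t :=
      Finset.sum_le_sum_of_subset (Finset.Ico_subset_Ico le_rfl hrn)
    have hsplit_in : ∑ t ∈ Finset.Ico i (n + 1), len (n + w) t
        = ∑ t ∈ Finset.Ico i n, len (n + w) t + len (n + w) n :=
      Finset.sum_Ico_succ_top (by omega : i ≤ n) _
    rcases Nat.le_one_iff_eq_zero_or_eq_one.mp hcle with rfl | rfl <;> omega
  · have hrn' : r ≤ n := by omega
    have hlenr := len_lb len n hlen2 hrec hn1 w r (by omega) hrn'
    by_cases hzone1 : s < w + 1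
    · -- before the prefix marker of the current block
      have hval : φ (n + w) (vtx (n + w + 1) i (u + (w + 1 - s))) = vtx (n + w) r (w + 1) :=
        phi_vtx_block φ len v0 vtx hrec hphiwalk (n + w) i r c (w + 1) h1 (by omega) hir hrle
          hcle (by omega) _ (by omega)
      refine ⟨u + (w + 1 - s), by omega, by omega, ?_⟩
      rw [Bw_phi φ vtx n w i _ r (w + 1) hval]
      exact hb1 r (by omega) hrn'
    · by_cases hzone2 : s ≤ len (n + w) r - Sf len n w - 1
      · by_cases hfit : s + cbnd len n w ≤ len (n + w) r - Sf len n w - 1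
        · obtain ⟨s', hs1, hs2, hval'⟩ := hc r (by omega) hrn' s (by omega) hfit
          have hval : φ (n + w) (vtx (n + w + 1) i (u + (s' - s))) = vtx (n + w) r s' :=
            phi_vtx_block φ len v0 vtx hrec hphiwalk (n + w) i r c s' h1 (by omega) hir hrle
              hcle (by omega) _ (by omega)
          refine ⟨u + (s' - s), by omega, by omega, ?_⟩
          rw [Bw_phi φ vtx n w i _ r s' hval]
          exact hval'
        · -- use the end marker of the current block
          have hval : φ (n + w) (vtx (n + w + 1) i (u + (len (n + w) r - Sf len n w - 1 - s)))
              = vtx (n + w) r (len (n + w) r - Sf len n w - 1) :=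
            phi_vtx_block φ len v0 vtx hrec hphiwalk (n + w) i r c _ h1 (by omega) hir hrle
              hcle (by omega) _ (by omega)
          refine ⟨u + (len (n + w) r - Sf len n w - 1 - s), by omega, by omega, ?_⟩
          rw [Bw_phi φ vtx n w i _ r _ hval]
          exact hb2 r (by omega) hrn'
      · -- in the suffix run of the current block: jump to the next block's marker
        rcases Nat.le_one_iff_eq_zero_or_eq_one.mp hcle with rfl | rfl
        · -- second copy of the same circuit
          have hx1 : w + 1 < len (n + w) r := by omega
          have hx2 : u + (len (n + w) r - s) + (w + 1)
              = 2 * ∑ t ∈ Finset.Ico i r, len (n + w) t + 1 * len (n + w) r + (w + 1) + 1 := by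
            omega
          have hval : φ (n + w) (vtx (n + w + 1) i (u + (len (n + w) r - s) + (w + 1)))
              = vtx (n + w) r (w + 1) :=
            phi_vtx_block φ len v0 vtx hrec hphiwalk (n + w) i r 1 (w + 1) h1 (by omega) hir
              hrle le_rfl hx1 _ hx2
          refine ⟨u + (len (n + w) r - s) + (w + 1), by omega, by omega, ?_⟩
          rw [Bw_phi φ vtx n w i _ r (w + 1) hval]
          exact hb1 r (by omega) hrn'
        · by_cases hrn2 : r < n
          · have hsucc : ∑ t ∈ Finset.Ico i (r + 1), len (n + w) t
                = ∑ t ∈ Finset.Ico i r, len (n + w) t + len (n + w) r :=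
              Finset.sum_Ico_succ_top hir _
            have hlenr1 := len_lb len n hlen2 hrec hn1 w (r + 1) (by omega) (by omega)
            have hy1 : w + 1 < len (n + w) (r + 1) := by omega
            have hy2 : u + (len (n + w) r - s) + (w + 1)
                = 2 * ∑ t ∈ Finset.Ico i (r + 1), len (n + w) t
                  + 0 * len (n + w) (r + 1) + (w + 1) + 1 := by
              rw [hsucc]; omega
            have hval : φ (n + w) (vtx (n + w + 1) i (u + (len (n + w) r - s) + (w + 1)))
                = vtx (n + w) (r + 1) (w + 1) :=
              phi_vtx_block φ len v0 vtx hrec hphiwalk (n + w) i (r + 1) 0 (w + 1) h1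
                (by omega) (by omega) (by omega) (by omega) hy1 _ hy2
            refine ⟨u + (len (n + w) r - s) + (w + 1), by omega, by omega, ?_⟩
            rw [Bw_phi φ vtx n w i _ (r + 1) (w + 1) hval]
            exact hb1 (r + 1) (by omega) (by omega)
          · exfalso
            have hrn3 : r = n := by omega
            rw [hrn3] at heq hslt hzone2
            have hsplitr : ∑ t ∈ Finset.Ico i (n + w + 1), len (n + w) t
                = ∑ t ∈ Finset.Ico i n, len (n + w) t + (len (n + w) n
                  + ∑ t ∈ Finset.Ico (n + 1) (n + w + 1), len (n + w) t) := hsplitn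
            omega

end WordStep

section WordPkg
variable {V : ℕ → Type} (φ : ∀ n, V (n + 1) → V n)
  (len : ℕ → ℕ → ℕ) (v0 : ∀ n, V n) (vtx : ∀ n, ℕ → ℕ → V n) (n : ℕ)
  (hends : ∀ k i, 1 ≤ i → i ≤ k → vtx k i 0 = v0 k ∧ vtx k i (len k i) = v0 k)
  (hlen2 : ∀ k i, 1 ≤ i → i ≤ k → 2 ≤ len k i)
  (hrec : ∀ k i, 1 ≤ i → i ≤ k →
      len (k + 1) i = 2 + 2 * ∑ j ∈ Finset.Icc i k, len k j)
  (hne : ∀ k i j, 1 ≤ i → i ≤ k → 0 < j → j < len k i → vtx k i j ≠ v0 k)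
  (hphi0 : ∀ k, φ k (v0 (k + 1)) = v0 k)
  (hphitop : ∀ k j, j ≤ len (k + 1) (k + 1) → φ k (vtx (k + 1) (k + 1) j) = v0 k)
  (hphiwalk : ∀ k i, 1 ≤ i → i ≤ k →
      List.map (φ k) (circList (vtx (k + 1)) i (len (k + 1) i)) =
        v0 k :: (((List.range' i (k + 1 - i)).flatMap fun t =>
          circList (vtx k) t (len k t) ++ circList (vtx k) t (len k t)) ++ [v0 k]))
  (hn1 : 1 ≤ n)

include hends hlen2 hrec hne hphi0 hphitop hphiwalk hn1 in
lemma word_pkg : ∀ w : ℕ,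
    (∀ i, 1 ≤ i → i ≤ n → ∀ j, j ≤ len (n + w) i →
        (j < w + 1 ∨ len (n + w) i - Sf len n w ≤ j) → Bw φ vtx n w i j = v0 n)
    ∧ (∀ i, 1 ≤ i → i ≤ n → Bw φ vtx n w i (w + 1) ≠ v0 n)
    ∧ (∀ i, 1 ≤ i → i ≤ n → Bw φ vtx n w i (len (n + w) i - Sf len n w - 1) ≠ v0 n)
    ∧ (∀ i, 1 ≤ i → i ≤ n → ∀ u, w + 1 ≤ u →
        u + cbnd len n w ≤ len (n + w) i - Sf len n w - 1 →
        ∃ s, u ≤ s ∧ s ≤ u + cbnd len n w ∧ Bw φ vtx n w i s ≠ v0 n)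
    ∧ (∀ i, n + 1 ≤ i → i ≤ n + w → ∀ j, j ≤ len (n + w) i → Bw φ vtx n w i j = v0 n) := by
  intro w
  induction w with
  | zero =>
      have hBw0 : ∀ i j, Bw φ vtx n 0 i j = vtx n i j := fun i j => rfl
      refine ⟨?_, ?_, ?_, ?_, ?_⟩
      · intro i h1 h2 j hj hdisj
        rw [hBw0]
        simp only [Nat.add_zero] at hj hdisj
        have hSf0 : Sf len n 0 = 0 := rfl
        rcases hdisj with hs | hb
        · have : j = 0 := by omega
          subst this
          exact (hends n i h1 h2).1
        · have : j = len n i := by omega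
          subst this
          exact (hends n i h1 h2).2
      · intro i h1 h2
        rw [hBw0]
        exact hne n i 1 h1 h2 (by omega) (by have := hlen2 n i h1 h2; omega)
      · intro i h1 h2
        rw [hBw0]
        have hSf0 : Sf len n 0 = 0 := rfl
        have h2l := hlen2 n i h1 h2
        simp only [Nat.add_zero, hSf0]
        exact hne n i (len n i - 0 - 1) h1 h2 (by omega) (by omega)
      · intro i h1 h2 u hu1 hu2
        have hcb0 : cbnd len n 0 = 0 := rfl
        have hSf0 : Sf len n 0 = 0 := rfl
        simp only [Nat.add_zero, hSf0, hcb0] at hu2 ⊢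
        refine ⟨u, le_rfl, by omega, ?_⟩
        rw [hBw0]
        exact hne n i u h1 h2 (by omega) (by omega)
      · intro i hi1 hi2 j hj
        exfalso; omega
  | succ w ih =>
      obtain ⟨ha, hb1, hb2, hc, hd⟩ := ih
      have hadd : n + (w + 1) = n + w + 1 := rfl
      rw [hadd]
      exact ⟨step_a φ len v0 vtx n hends hlen2 hrec hphi0 hphiwalk hn1 w ha hd,
        step_b1 φ len v0 vtx n hlen2 hrec hphiwalk hn1 w hb1,
        step_b2 φ len v0 vtx n hlen2 hrec hphiwalk hn1 w hb2,
        step_c φ len v0 vtx n hlen2 hrec hphiwalk hn1 w hb1 hb2 hc,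
        step_d φ len v0 vtx n hends hlen2 hrec hphi0 hphitop hphiwalk hn1 w hd⟩

end WordPkg

section Core
variable {V : ℕ → Type} (φ : ∀ n, V (n + 1) → V n)
  (len : ℕ → ℕ → ℕ) (v0 : ∀ n, V n) (vtx : ∀ n, ℕ → ℕ → V n) (n : ℕ)
  (hends : ∀ k i, 1 ≤ i → i ≤ k → vtx k i 0 = v0 k ∧ vtx k i (len k i) = v0 k)
  (hlen2 : ∀ k i, 1 ≤ i → i ≤ k → 2 ≤ len k i)
  (hrec : ∀ k i, 1 ≤ i → i ≤ k →
      len (k + 1) i = 2 + 2 * ∑ j ∈ Finset.Icc i k, len k j)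
  (hne : ∀ k i j, 1 ≤ i → i ≤ k → 0 < j → j < len k i → vtx k i j ≠ v0 k)
  (hphi0 : ∀ k, φ k (v0 (k + 1)) = v0 k)
  (hphitop : ∀ k j, j ≤ len (k + 1) (k + 1) → φ k (vtx (k + 1) (k + 1) j) = v0 k)
  (hphiwalk : ∀ k i, 1 ≤ i → i ≤ k →
      List.map (φ k) (circList (vtx (k + 1)) i (len (k + 1) i)) =
        v0 k :: (((List.range' i (k + 1 - i)).flatMap fun t =>
          circList (vtx k) t (len k t) ++ circList (vtx k) t (len k t)) ++ [v0 k]))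
  (hn1 : 1 ≤ n)

include hends hlen2 hrec hne hphi0 hphitop hphiwalk hn1 in
lemma core_contra (d w p q K : ℕ) (hd1 : 1 ≤ d) (hdn : d ≤ n)
    (hq : q < len (n + w) d) (hpq : p < q)
    (hmargp : K + Sf len n w + (w + 1) + 2 ≤ len (n + w) d - p)
    (hmargq : K + Sf len n w + (w + 1) + 2 ≤ len (n + w) d - q)
    (hmatch : ∀ k, K ≤ k → k ≤ len (n + w) d - q →
      Bw φ vtx n w d (p + k) = Bw φ vtx n w d (q + k)) :
    False := by
  obtain ⟨pa, pb1, pb2, pc, pd⟩ :=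
    word_pkg φ len v0 vtx n hends hlen2 hrec hne hphi0 hphitop hphiwalk hn1 w
  have hSc := cbnd_le_Sf len n hlen2 hn1 w
  by_cases hδ : q - p ≤ Sf len n w + 1
  · -- small offset: the end marker maps into the suffix run
    have hk0a : K ≤ len (n + w) d - Sf len n w - 1 - p := by omega
    have hk0b : len (n + w) d - Sf len n w - 1 - p ≤ len (n + w) d - q := by omega
    have h := hmatch _ hk0a hk0b
    have he1 : p + (len (n + w) d - Sf len n w - 1 - p) = len (n + w) d - Sf len n w - 1 := by
      omega
    rw [he1] at h
    have h2 := pa d hd1 hdn (q + (len (n + w) d - Sf len n w - 1 - p)) (by omega)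
      (Or.inr (by omega))
    rw [h2] at h
    exact pb2 d hd1 hdn h
  · -- large offset: a long run of `v0` appears in the middle of the word
    have hallv0 : ∀ j, len (n + w) d - (q - p) - Sf len n w ≤ j →
        j ≤ len (n + w) d - (q - p) → Bw φ vtx n w d j = v0 n := by
      intro j hj1 hj2
      have hka : K ≤ j - p := by omega
      have hkb : j - p ≤ len (n + w) d - q := by omega
      have h := hmatch _ hka hkb
      have he1 : p + (j - p) = j := by omega
      have he2 : q + (j - p) = j + (q - p) := by omega
      rw [he1, he2] at h
      rw [h]
      exact pa d hd1 hdn (j + (q - p)) (by omega) (Or.inr (by omega))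
    obtain ⟨s, hs1, hs2, hsne⟩ := pc d hd1 hdn (len (n + w) d - (q - p) - Sf len n w)
      (by omega) (by omega)
    exact hsne (hallv0 s (by omega) (by omega))

end Core

theorem stmt17
    (V : ℕ → Type) [∀ n, TopologicalSpace (V n)] [∀ n, DiscreteTopology (V n)]
    [∀ n, Fintype (V n)]
    (E : ∀ n, V n → V n → Prop) (φ : ∀ n, V (n + 1) → V n)
    (len : ℕ → ℕ → ℕ) (v0 : ∀ n, V n) (vtx : ∀ n, ℕ → ℕ → V n)
    (hV0 : ∀ u : V 0, u = v0 0)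
    (hE0 : ∀ u v : V 0, E 0 u v ↔ u = v0 0 ∧ v = v0 0)
    (hends : ∀ n i, 1 ≤ i → i ≤ n → vtx n i 0 = v0 n ∧ vtx n i (len n i) = v0 n)
    (hlen2 : ∀ n i, 1 ≤ i → i ≤ n → 2 ≤ len n i)
    (hrec : ∀ n i, 1 ≤ i → i ≤ n →
      len (n + 1) i = 2 + 2 * ∑ j ∈ Finset.Icc i n, len n j)
    (hne : ∀ n i j, 1 ≤ i → i ≤ n → 0 < j → j < len n i → vtx n i j ≠ v0 n)
    (hinj : ∀ n i j i' j', 1 ≤ i → i ≤ n → 1 ≤ i' → i' ≤ n →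
      0 < j → j < len n i → 0 < j' → j' < len n i' →
      vtx n i j = vtx n i' j' → i = i' ∧ j = j')
    (hall : ∀ n, 1 ≤ n → ∀ u : V n,
      u = v0 n ∨ ∃ i j, 1 ≤ i ∧ i ≤ n ∧ 0 < j ∧ j < len n i ∧ u = vtx n i j)
    (hE : ∀ n, 1 ≤ n → ∀ u v : V n, E n u v ↔
      (u = v0 n ∧ v = v0 n) ∨
      ∃ i j, 1 ≤ i ∧ i ≤ n ∧ j < len n i ∧ u = vtx n i j ∧ v = vtx n i (j + 1))
    (hphi0 : ∀ n, φ n (v0 (n + 1)) = v0 n)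
    (hphitop : ∀ n j, j ≤ len (n + 1) (n + 1) → φ n (vtx (n + 1) (n + 1) j) = v0 n)
    (hphiwalk : ∀ n i, 1 ≤ i → i ≤ n →
      List.map (φ n) (circList (vtx (n + 1)) i (len (n + 1) i)) =
        v0 n :: (((List.range' i (n + 1 - i)).flatMap fun k =>
          circList (vtx n) k (len n k) ++ circList (vtx n) k (len n k)) ++ [v0 n]))
    (hcov : ∀ n, IsCover (E (n + 1)) (E n) (φ n))
    (f : InvLim V φ ≃ₜ InvLim V φ)
    (hf : ∀ x y : InvLim V φ, ERel E φ x y ↔ f x = y)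
    (m : MetricSpace (InvLim V φ))
    (hm : mtop m = (inferInstance : TopologicalSpace (InvLim V φ)))
    (degv : ∀ n, V n → ℕ∞)
    (hdegv0 : ∀ n, degv n (v0 n) = ⊤)
    (hdegvi : ∀ n i j, 1 ≤ i → i ≤ n → 0 < j → j < len n i →
      degv n (vtx n i j) = (i : ℕ∞)) :
    ∀ x y : InvLim V φ, x ≠ y →
      (⨅ n, degv n (x.1 n)) = (⨅ n, degv n (y.1 n)) →
      (⨅ n, degv n (x.1 n)) ≠ ⊤ →
      0 < Filter.limsup (fun k => mdist m ((⇑f)^[k] x) ((⇑f)^[k] y)) Filter.atTop := by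
  intro x y hxy hdeq hfin
  by_contra hlim
  classical
  -- one-step edges along the orbit
  have hstep : ∀ z : InvLim V φ, ∀ ℓ, E ℓ (z.1 ℓ) ((f z).1 ℓ) := fun z ℓ =>
    ((hf z (f z)).mpr rfl) ℓ
  -- unique successor from the interior of a circuit
  have hsucc : ∀ z : InvLim V φ, ∀ ℓ i j, 1 ≤ ℓ → 1 ≤ i → i ≤ ℓ → 0 < j → j < len ℓ i →
      z.1 ℓ = vtx ℓ i j → (f z).1 ℓ = vtx ℓ i (j + 1) := by
    intro z ℓ i j hℓ hi1 hi2 hj0 hjl hz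
    have he := hstep z ℓ
    rw [hE ℓ hℓ] at he
    rcases he with ⟨hu, hv⟩ | ⟨i', j', hi'1, hi'2, hj', hu, hv⟩
    · exfalso; rw [hz] at hu; exact hne ℓ i j hi1 hi2 hj0 hjl hu
    · rw [hz] at hu
      have hj'0 : 0 < j' := by
        rcases Nat.eq_zero_or_pos j' with h0 | h0
        · exfalso
          subst h0
          rw [(hends ℓ i' hi'1 hi'2).1] at hu
          exact hne ℓ i j hi1 hi2 hj0 hjl hu
        · exact h0
      obtain ⟨hii, hjj⟩ := hinj ℓ i j i' j' hi1 hi2 hi'1 hi'2 hj0 hjl hj'0 hj' hu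
      rw [hv, ← hii, ← hjj]
  -- deterministic run along a circuit
  have hiter : ∀ z : InvLim V φ, ∀ ℓ dd a, 1 ≤ ℓ → 1 ≤ dd → dd ≤ ℓ → 0 < a →
      z.1 ℓ = vtx ℓ dd a → ∀ r, a + r ≤ len ℓ dd → ((⇑f)^[r] z).1 ℓ = vtx ℓ dd (a + r) := by
    intro z ℓ dd a hℓ h1 h2 ha hz r
    induction r with
    | zero => intro _; simpa using hz
    | succ r ih =>
        intro hr
        have hprev := ih (by omega)
        have hnext := hsucc ((⇑f)^[r] z) ℓ dd (a + r) hℓ h1 h2 (by omega) (by omega) hprev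
        rw [Function.iterate_succ_apply', show a + (r + 1) = a + r + 1 from rfl]
        exact hnext
  -- classification of vertices with finite degree
  have hclass : ∀ ℓ, 1 ≤ ℓ → ∀ u : V ℓ, degv ℓ u ≠ ⊤ →
      ∃ i j, 1 ≤ i ∧ i ≤ ℓ ∧ 0 < j ∧ j < len ℓ i ∧ u = vtx ℓ i j ∧ degv ℓ u = (i : ℕ∞) := by
    intro ℓ hℓ u hu
    rcases hall ℓ hℓ u with h0 | ⟨i, j, hi1, hi2, hj0, hjl, he⟩
    · exact absurd (by rw [h0, hdegv0]) hu
    · exact ⟨i, j, hi1, hi2, hj0, hjl, he, by rw [he, hdegvi ℓ i j hi1 hi2 hj0 hjl]⟩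
  -- monotonicity of the degree along levels
  have hmono : ∀ z : InvLim V φ, ∀ ℓ, degv (ℓ + 1) (z.1 (ℓ + 1)) ≤ degv ℓ (z.1 ℓ) := by
    intro z ℓ
    rcases hall (ℓ + 1) (by omega) (z.1 (ℓ + 1)) with h0 | ⟨i, j, hi1, hi2, hj0, hjl, he⟩
    · have hz : z.1 ℓ = v0 ℓ := by rw [← z.2 ℓ, h0, hphi0]
      rw [hz, hdegv0]; exact le_top
    · rw [he, hdegvi (ℓ + 1) i j hi1 hi2 hj0 hjl]
      by_cases htop : i = ℓ + 1
      · subst htop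
        have hz : z.1 ℓ = v0 ℓ := by
          rw [← z.2 ℓ, he]
          exact hphitop ℓ j (by omega)
        rw [hz, hdegv0]; exact le_top
      · have hi2' : i ≤ ℓ := by omega
        by_cases hend2 : j = len (ℓ + 1) i - 1
        · have hz : z.1 ℓ = v0 ℓ := by
            rw [← z.2 ℓ, he, hend2]
            exact phi_vtx_end φ len v0 vtx hrec hphiwalk ℓ i hi1 hi2'
          rw [hz, hdegv0]; exact le_top
        · obtain ⟨r, c, s, hir, hrle, hcle, hslt, heq⟩ :=
            decode len hrec ℓ (ℓ - i) i (by omega) hi1 j (by omega) (by omega)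
          have hz : z.1 ℓ = vtx ℓ r s := by
            rw [← z.2 ℓ, he]
            exact phi_vtx_block φ len v0 vtx hrec hphiwalk ℓ i r c s hi1 hi2' hir hrle hcle
              hslt j (by omega)
          rcases Nat.eq_zero_or_pos s with hs0 | hs0
          · subst hs0
            rw [hz, (hends ℓ r (by omega) hrle).1, hdegv0]; exact le_top
          · rw [hz, hdegvi ℓ r s (by omega) hrle hs0 hslt]
            exact Nat.cast_le.mpr hir
  have hmono' : ∀ z : InvLim V φ, ∀ a b, a ≤ b → degv b (z.1 b) ≤ degv a (z.1 a) := by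
    intro z a b hab
    induction b with
    | zero =>
        have h0 : a = 0 := by omega
        subst h0; exact le_rfl
    | succ b ih =>
        rcases Nat.lt_or_ge a (b + 1) with h | h
        · exact le_trans (hmono z b) (ih (by omega))
        · have h0 : a = b + 1 := by omega
          subst h0; exact le_rfl
  -- the common finite degree
  obtain ⟨d, hd⟩ : ∃ d : ℕ, (⨅ n', degv n' (x.1 n')) = (d : ℕ∞) := by
    cases hcase : (⨅ n', degv n' (x.1 n')) with
    | top => exact absurd hcase hfin
    | coe d => exact ⟨d, rfl⟩
  have hstab : ∀ z : InvLim V φ, (⨅ n', degv n' (z.1 n')) = (d : ℕ∞) →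
      ∃ L, ∀ ℓ, L ≤ ℓ → degv ℓ (z.1 ℓ) = (d : ℕ∞) := by
    intro z hz
    have hlt : (⨅ n', degv n' (z.1 n')) < (d : ℕ∞) + 1 := by
      rw [hz]
      have hcast : ((d : ℕ∞) + 1) = ((d + 1 : ℕ) : ℕ∞) := by push_cast; ring
      rw [hcast]
      exact_mod_cast Nat.lt_succ_self d
    obtain ⟨ℓ₀, hℓ₀⟩ := iInf_lt_iff.mp hlt
    have hle₀ : degv ℓ₀ (z.1 ℓ₀) ≤ (d : ℕ∞) := by
      by_contra hcon
      push_neg at hcon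
      have h2 : (d : ℕ∞) + 1 ≤ degv ℓ₀ (z.1 ℓ₀) :=
        (ENat.add_one_le_iff (ENat.coe_ne_top d)).mpr hcon
      exact absurd hℓ₀ (not_lt.mpr h2)
    have heq₀ : degv ℓ₀ (z.1 ℓ₀) = (d : ℕ∞) :=
      le_antisymm hle₀ (by rw [← hz]; exact iInf_le _ ℓ₀)
    exact ⟨ℓ₀, fun ℓ hℓ => le_antisymm (by rw [← heq₀]; exact hmono' z ℓ₀ ℓ hℓ)
      (by rw [← hz]; exact iInf_le _ ℓ)⟩
  obtain ⟨L₁, hL₁⟩ := hstab x hd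
  obtain ⟨L₂, hL₂⟩ := hstab y (by rw [← hdeq]; exact hd)
  -- the degree is at least 1
  have hd1 : 1 ≤ d := by
    have h := hL₁ (L₁ + 1) (by omega)
    obtain ⟨i, j, hi1, hi2, hj0, hjl, he, hdeg⟩ :=
      hclass (L₁ + 1) (by omega) _ (by rw [h]; exact ENat.coe_ne_top d)
    rw [h] at hdeg
    have hid : d = i := Nat.cast_inj.mp hdeg
    omega
  -- a level where x and y disagree
  obtain ⟨ℓs, hℓs⟩ : ∃ ℓs, x.1 ℓs ≠ y.1 ℓs := by
    by_contra hcon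
    push_neg at hcon
    exact hxy (Subtype.ext (funext hcon))
  set n := L₁ + L₂ + ℓs + d + 1 with hn
  have hn1 : 1 ≤ n := by omega
  -- positions of x and y on circuit d at levels ≥ n
  have hxpos : ∀ v : ℕ, ∃ j, 0 < j ∧ j < len (n + v) d ∧ x.1 (n + v) = vtx (n + v) d j := by
    intro v
    have h := hL₁ (n + v) (by omega)
    obtain ⟨i, j, hi1, hi2, hj0, hjl, he, hdeg⟩ :=
      hclass (n + v) (by omega) _ (by rw [h]; exact ENat.coe_ne_top d)
    rw [h] at hdeg
    have hid : d = i := Nat.cast_inj.mp hdeg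
    subst hid
    exact ⟨j, hj0, hjl, he⟩
  have hypos : ∀ v : ℕ, ∃ j, 0 < j ∧ j < len (n + v) d ∧ y.1 (n + v) = vtx (n + v) d j := by
    intro v
    have h := hL₂ (n + v) (by omega)
    obtain ⟨i, j, hi1, hi2, hj0, hjl, he, hdeg⟩ :=
      hclass (n + v) (by omega) _ (by rw [h]; exact ENat.coe_ne_top d)
    rw [h] at hdeg
    have hid : d = i := Nat.cast_inj.mp hdeg
    subst hid
    exact ⟨j, hj0, hjl, he⟩
  choose px hpx0 hpxl hpxe using hxpos
  choose qy hqy0 hqyl hqye using hypos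
  -- disagreement persists upward
  have hneq : ∀ v, x.1 (n + v) ≠ y.1 (n + v) := by
    intro v hcon
    apply hℓs
    have hk : ℓs + (n + v - ℓs) = n + v := by omega
    rw [← projD_compat φ x ℓs (n + v - ℓs), ← projD_compat φ y ℓs (n + v - ℓs)]
    congr 1
    rw [hk]
    exact hcon
  -- coherence of positions between consecutive levels (for x)
  have hcohx : ∀ v, ∃ c, c ≤ 1 ∧ px (v + 1) = px v + 1 + c * len (n + v) d := by
    intro v
    have hx1 : x.1 (n + v + 1) = vtx (n + v + 1) d (px (v + 1)) := hpxe (v + 1)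
    have hx0 : x.1 (n + v) = vtx (n + v) d (px v) := hpxe v
    have hphix := x.2 (n + v)
    have hd2 : d ≤ n + v := by omega
    have hplt : px (v + 1) < len (n + v + 1) d := hpxl (v + 1)
    have hp0 : 0 < px (v + 1) := hpx0 (v + 1)
    by_cases hpend : px (v + 1) = len (n + v + 1) d - 1
    · exfalso
      rw [hx1, hpend, phi_vtx_end φ len v0 vtx hrec hphiwalk (n + v) d hd1 hd2] at hphix
      exact hne (n + v) d (px v) hd1 hd2 (hpx0 v) (hpxl v) (hx0.symm.trans hphix.symm)
    · obtain ⟨r, c, s, hir, hrle, hcle, hslt, heq⟩ :=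
        decode len hrec (n + v) (n + v - d) d (by omega) hd1 (px (v + 1)) (by omega) (by omega)
      have hval : φ (n + v) (vtx (n + v + 1) d (px (v + 1))) = vtx (n + v) r s :=
        phi_vtx_block φ len v0 vtx hrec hphiwalk (n + v) d r c s hd1 hd2 hir hrle hcle hslt
          _ (by omega)
      rw [hx1, hval] at hphix
      rcases Nat.eq_zero_or_pos s with hs0 | hs0
      · exfalso
        subst hs0
        rw [(hends (n + v) r (by omega) hrle).1] at hphix
        exact hne (n + v) d (px v) hd1 hd2 (hpx0 v) (hpxl v) (hx0.symm.trans hphix.symm)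
      · obtain ⟨hrd, hspx⟩ := hinj (n + v) d (px v) r s hd1 hd2 (by omega) hrle (hpx0 v)
          (hpxl v) hs0 hslt ((hphix.trans hx0).symm)
        rw [← hrd, ← hspx] at heq
        have hico : ∑ t ∈ Finset.Ico d d, len (n + v) t = 0 := by simp
        exact ⟨c, hcle, by omega⟩
  have hcohy : ∀ v, ∃ c, c ≤ 1 ∧ qy (v + 1) = qy v + 1 + c * len (n + v) d := by
    intro v
    have hx1 : y.1 (n + v + 1) = vtx (n + v + 1) d (qy (v + 1)) := hqye (v + 1)
    have hx0 : y.1 (n + v) = vtx (n + v) d (qy v) := hqye v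
    have hphix := y.2 (n + v)
    have hd2 : d ≤ n + v := by omega
    have hplt : qy (v + 1) < len (n + v + 1) d := hqyl (v + 1)
    have hp0 : 0 < qy (v + 1) := hqy0 (v + 1)
    by_cases hpend : qy (v + 1) = len (n + v + 1) d - 1
    · exfalso
      rw [hx1, hpend, phi_vtx_end φ len v0 vtx hrec hphiwalk (n + v) d hd1 hd2] at hphix
      exact hne (n + v) d (qy v) hd1 hd2 (hqy0 v) (hqyl v) (hx0.symm.trans hphix.symm)
    · obtain ⟨r, c, s, hir, hrle, hcle, hslt, heq⟩ :=
        decode len hrec (n + v) (n + v - d) d (by omega) hd1 (qy (v + 1)) (by omega) (by omega)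
      have hval : φ (n + v) (vtx (n + v + 1) d (qy (v + 1))) = vtx (n + v) r s :=
        phi_vtx_block φ len v0 vtx hrec hphiwalk (n + v) d r c s hd1 hd2 hir hrle hcle hslt
          _ (by omega)
      rw [hx1, hval] at hphix
      rcases Nat.eq_zero_or_pos s with hs0 | hs0
      · exfalso
        subst hs0
        rw [(hends (n + v) r (by omega) hrle).1] at hphix
        exact hne (n + v) d (qy v) hd1 hd2 (hqy0 v) (hqyl v) (hx0.symm.trans hphix.symm)
      · obtain ⟨hrd, hspx⟩ := hinj (n + v) d (qy v) r s hd1 hd2 (by omega) hrle (hqy0 v)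
          (hqyl v) hs0 hslt ((hphix.trans hx0).symm)
        rw [← hrd, ← hspx] at heq
        have hico : ∑ t ∈ Finset.Ico d d, len (n + v) t = 0 := by simp
        exact ⟨c, hcle, by omega⟩
  -- growth of the exit times
  have hgrowx : ∀ v, Sf len n v + 4 * v + 1 ≤ len (n + v) d - px v := by
    intro v
    induction v with
    | zero =>
        have h := hpxl 0
        have hS : Sf len n 0 = 0 := rfl
        omega
    | succ v ih =>
        obtain ⟨c, hcle, hco⟩ := hcohx v
        have hlrec : len (n + v + 1) d = 2 + 2 * ∑ t ∈ Finset.Ico d (n + v + 1), len (n + v) t :=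
          lenIco len hrec (n + v) d hd1 (by omega)
        have hsplit1 : ∑ t ∈ Finset.Ico d (n + v + 1), len (n + v) t
            = len (n + v) d + ∑ t ∈ Finset.Ico (d + 1) (n + v + 1), len (n + v) t :=
          Finset.sum_eq_sum_Ico_succ_bot (by omega) _
        have hsplit2 : ∑ t ∈ Finset.Ico (d + 1) (n + v + 1), len (n + v) t
            = ∑ t ∈ Finset.Ico (d + 1) (n + 1), len (n + v) t
              + ∑ t ∈ Finset.Ico (n + 1) (n + v + 1), len (n + v) t := by
          rw [← Finset.sum_Ico_consecutive (fun t => len (n + v) t)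
            (by omega : d + 1 ≤ n + 1) (by omega : n + 1 ≤ n + v + 1)]
        have hsingle : len (n + v) n ≤ ∑ t ∈ Finset.Ico (d + 1) (n + 1), len (n + v) t :=
          Finset.single_le_sum (f := fun t => len (n + v) t) (fun t _ => Nat.zero_le _)
            (by rw [Finset.mem_Ico]; omega)
        have hlnn : 2 ≤ len (n + v) n := hlen2 (n + v) n hn1 (by omega)
        have hGam : Gam len n (n + v)
            = 2 * ∑ t ∈ Finset.Ico (n + 1) (n + v + 1), len (n + v) t + 1 :=
          Gam_Ico len n hlen2 hn1 v
        have hSf : Sf len n (v + 1) = Sf len n v + Gam len n (n + v) := rfl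
        have hcl : c * len (n + v) d ≤ 1 * len (n + v) d := Nat.mul_le_mul_right _ hcle
        show Sf len n (v + 1) + 4 * (v + 1) + 1 ≤ len (n + v + 1) d - px (v + 1)
        omega
  have hgrowy : ∀ v, Sf len n v + 4 * v + 1 ≤ len (n + v) d - qy v := by
    intro v
    induction v with
    | zero =>
        have h := hqyl 0
        have hS : Sf len n 0 = 0 := rfl
        omega
    | succ v ih =>
        obtain ⟨c, hcle, hco⟩ := hcohy v
        have hlrec : len (n + v + 1) d = 2 + 2 * ∑ t ∈ Finset.Ico d (n + v + 1), len (n + v) t :=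
          lenIco len hrec (n + v) d hd1 (by omega)
        have hsplit1 : ∑ t ∈ Finset.Ico d (n + v + 1), len (n + v) t
            = len (n + v) d + ∑ t ∈ Finset.Ico (d + 1) (n + v + 1), len (n + v) t :=
          Finset.sum_eq_sum_Ico_succ_bot (by omega) _
        have hsplit2 : ∑ t ∈ Finset.Ico (d + 1) (n + v + 1), len (n + v) t
            = ∑ t ∈ Finset.Ico (d + 1) (n + 1), len (n + v) t
              + ∑ t ∈ Finset.Ico (n + 1) (n + v + 1), len (n + v) t := by
          rw [← Finset.sum_Ico_consecutive (fun t => len (n + v) t)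
            (by omega : d + 1 ≤ n + 1) (by omega : n + 1 ≤ n + v + 1)]
        have hsingle : len (n + v) n ≤ ∑ t ∈ Finset.Ico (d + 1) (n + 1), len (n + v) t :=
          Finset.single_le_sum (f := fun t => len (n + v) t) (fun t _ => Nat.zero_le _)
            (by rw [Finset.mem_Ico]; omega)
        have hlnn : 2 ≤ len (n + v) n := hlen2 (n + v) n hn1 (by omega)
        have hGam : Gam len n (n + v)
            = 2 * ∑ t ∈ Finset.Ico (n + 1) (n + v + 1), len (n + v) t + 1 :=
          Gam_Ico len n hlen2 hn1 v
        have hSf : Sf len n (v + 1) = Sf len n v + Gam len n (n + v) := rfl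
        have hcl : c * len (n + v) d ≤ 1 * len (n + v) d := Nat.mul_le_mul_right _ hcle
        show Sf len n (v + 1) + 4 * (v + 1) + 1 ≤ len (n + v + 1) d - qy (v + 1)
        omega
  -- eventual agreement at level n (from the limsup assumption)
  obtain ⟨K, hK⟩ : ∃ K, ∀ k, K ≤ k → ((⇑f)^[k] x).1 n = ((⇑f)^[k] y).1 n := by
    by_contra hno
    push_neg at hno
    exact hlim (freq_ne_limsup_pos V φ m hm (fun k => (⇑f)^[k] x) (fun k => (⇑f)^[k] y) n hno)
  set w := K + 3 with hw
  -- itineraries at level n through level n+w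
  have hitx : ∀ k, k ≤ len (n + w) d - px w → ((⇑f)^[k] x).1 n = Bw φ vtx n w d (px w + k) := by
    intro k hk
    have hxm : x.1 (n + w) = vtx (n + w) d (px w) := hpxe w
    have hup : ((⇑f)^[k] x).1 (n + w) = vtx (n + w) d (px w + k) :=
      hiter x (n + w) d (px w) (by omega) hd1 (by omega) (hpx0 w) hxm k
        (by have := hpxl w; omega)
    have hcompat := projD_compat φ ((⇑f)^[k] x) n w
    rw [← hcompat, hup]
    rfl
  have hity : ∀ k, k ≤ len (n + w) d - qy w → ((⇑f)^[k] y).1 n = Bw φ vtx n w d (qy w + k) := by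
    intro k hk
    have hxm : y.1 (n + w) = vtx (n + w) d (qy w) := hqye w
    have hup : ((⇑f)^[k] y).1 (n + w) = vtx (n + w) d (qy w + k) :=
      hiter y (n + w) d (qy w) (by omega) hd1 (by omega) (hqy0 w) hxm k
        (by have := hqyl w; omega)
    have hcompat := projD_compat φ ((⇑f)^[k] y) n w
    rw [← hcompat, hup]
    rfl
  have hpq : px w ≠ qy w := by
    intro hcon
    apply hneq w
    rw [hpxe w, hqye w, hcon]
  have hmx := hgrowx w
  have hmy := hgrowy w
  rcases Nat.lt_or_ge (px w) (qy w) with hlt | hge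
  · exact core_contra φ len v0 vtx n hends hlen2 hrec hne hphi0 hphitop hphiwalk hn1
      d w (px w) (qy w) K hd1 (by omega) (hqyl w) hlt (by omega) (by omega)
      (fun k hk1 hk2 => by
        rw [← hitx k (by have := hqyl w; omega), ← hity k hk2]
        exact hK k hk1)
  · have hlt' : qy w < px w := by omega
    exact core_contra φ len v0 vtx n hends hlen2 hrec hne hphi0 hphitop hphiwalk hn1
      d w (qy w) (px w) K hd1 (by omega) (hpxl w) hlt' (by omega) (by omega)
      (fun k hk1 hk2 => by
        rw [← hity k (by have := hpxl w; omega), ← hitx k hk2]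
        exact (hK k hk1).symm)
end

section
/- In the Cantor system (X,f) of the construction, if x ≠ y are points of X both distinct from p with deg(x) + 2 ≤ deg(y) < ∞, then limsup_{k→∞} d(f^k(x), f^k(y)) > 0. -/
open Filter Topology
open scoped ENNReal

/- ---------------- auxiliary lemmas ---------------- -/

theorem mem_of_getElem?' {α} {l : List α} {i : ℕ} {a : α} (h : l[i]? = some a) : a ∈ l := by
  have h1 : i < l.length := by
    by_contra hc
    rw [List.getElem?_eq_none (by omega)] at h; simp at h
  rw [List.getElem?_eq_getElem h1] at h
  simp at h
  exact h ▸ List.getElem_mem h1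

def wlist (V : ℕ → Type) (len : ℕ → ℕ → ℕ) (v0 : ∀ n, V n) (vtx : ∀ n, ℕ → ℕ → V n)
    (n a : ℕ) : List (V n) :=
  v0 n :: (((List.range' a (n + 1 - a)).flatMap fun k =>
    circList (vtx n) k (len n k) ++ circList (vtx n) k (len n k)) ++ [v0 n])

section wlistLemmas

variable (V : ℕ → Type) (len : ℕ → ℕ → ℕ) (v0 : ∀ n, V n) (vtx : ∀ n, ℕ → ℕ → V n)

theorem circList_length (n i : ℕ) : (circList (vtx n) i (len n i)).length = len n i :=
  List.length_ofFn

theorem circList_getElem? (n i t : ℕ) (h : t < len n i) :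
    (circList (vtx n) i (len n i))[t]? = some (vtx n i t) := by
  simp [circList, List.getElem?_ofFn, h]

theorem double_getElem? (n a : ℕ) (h0 : vtx n a 0 = v0 n) (hlen : vtx n a (len n a) = v0 n)
    (hl : 1 ≤ len n a) (rest : List (V n)) (t : ℕ) (ht : t ≤ len n a) :
    (circList (vtx n) a (len n a) ++ (circList (vtx n) a (len n a) ++ rest))[t]? =
      some (vtx n a t) := by
  have hcl := circList_length V len vtx n a
  rcases lt_or_eq_of_le ht with ht' | rfl
  · rw [List.getElem?_append_left (by omega)]
    exact circList_getElem? V len vtx n a t ht'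
  · rw [List.getElem?_append_right (by omega),
      show len n a - (circList (vtx n) a (len n a)).length = 0 by omega,
      List.getElem?_append_left (by omega)]
    rw [circList_getElem? V len vtx n a 0 (by omega), h0, hlen]

theorem wlist_decomp (n a : ℕ) (ha : a ≤ n) :
    wlist V len v0 vtx n a = v0 n ::
      ((circList (vtx n) a (len n a) ++ circList (vtx n) a (len n a)) ++
        (((List.range' (a+1) (n - a)).flatMap fun k =>
          circList (vtx n) k (len n k) ++ circList (vtx n) k (len n k)) ++ [v0 n])) := by
  obtain ⟨c, hc⟩ : ∃ c, n + 1 - a = c + 1 := ⟨n - a, by omega⟩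
  have hc' : n - a = c := by omega
  rw [wlist, hc, hc', List.range'_succ, List.flatMap_cons, List.append_assoc]

theorem wlist_mem (hends : ∀ n i, 1 ≤ i → i ≤ n → vtx n i 0 = v0 n ∧ vtx n i (len n i) = v0 n)
    (n a : ℕ) (ha1 : 1 ≤ a) (ha : a ≤ n) :
    ∀ u ∈ wlist V len v0 vtx n a,
      u = v0 n ∨ ∃ k t, a ≤ k ∧ k ≤ n ∧ 0 < t ∧ t < len n k ∧ u = vtx n k t := by
  intro u hu
  rw [wlist, List.mem_cons, List.mem_append, List.mem_flatMap] at hu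
  rcases hu with h | ⟨k, hk, hmem⟩ | h
  · exact Or.inl h
  · rw [List.mem_range'] at hk
    obtain ⟨q, hq, rfl⟩ := hk
    rw [List.mem_append] at hmem
    have hmem' : u ∈ circList (vtx n) (a + 1 * q) (len n (a + 1 * q)) := by tauto
    rw [circList, List.mem_ofFn] at hmem'
    obtain ⟨⟨t, ht⟩, rfl⟩ := hmem'
    rcases Nat.eq_zero_or_pos t with rfl | htpos
    · exact Or.inl (hends n (a + 1*q) (by omega) (by omega)).1
    · exact Or.inr ⟨a + 1*q, t, by omega, by omega, htpos, ht, rfl⟩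
  · simp at h; exact Or.inl h

theorem wlist_tail_mem
    (hends : ∀ n i, 1 ≤ i → i ≤ n → vtx n i 0 = v0 n ∧ vtx n i (len n i) = v0 n)
    (n a : ℕ) (ha1 : 1 ≤ a) (ha : a ≤ n) (b : ℕ) (hb1 : 1 + 2 * len n a ≤ b) (u : V n)
    (hu : (wlist V len v0 vtx n a)[b]? = some u) :
    u = v0 n ∨ ∃ k t, a + 1 ≤ k ∧ k ≤ n ∧ 0 < t ∧ t < len n k ∧ u = vtx n k t := by
  have hd := wlist_decomp V len v0 vtx n a ha
  set R : List (V n) := ((List.range' (a+1) (n - a)).flatMap fun k =>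
      circList (vtx n) k (len n k) ++ circList (vtx n) k (len n k)) ++ [v0 n] with hR
  have hcl := circList_length V len vtx n a
  have e1 : (wlist V len v0 vtx n a)[b]? = R[b - (1 + 2 * len n a)]? := by
    rw [hd, show b = (b - 1) + 1 by omega, List.getElem?_cons_succ]
    simp only [List.append_assoc]
    rw [List.getElem?_append_right (by omega),
      List.getElem?_append_right (by simp [hcl]; omega)]
    rw [hR]
    congr 1; simp [hcl]; omega
  rw [e1] at hu
  have hmem : u ∈ R := mem_of_getElem?' hu
  rw [hR, List.mem_append, List.mem_flatMap] at hmem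
  rcases hmem with ⟨k, hk, hmemk⟩ | h
  · rw [List.mem_range'] at hk
    obtain ⟨q, hq, rfl⟩ := hk
    rw [List.mem_append] at hmemk
    have hmem' : u ∈ circList (vtx n) (a+1 + 1 * q) (len n (a+1 + 1 * q)) := by tauto
    rw [circList, List.mem_ofFn] at hmem'
    obtain ⟨⟨t, ht⟩, hvt⟩ := hmem'
    rcases Nat.eq_zero_or_pos t with rfl | htpos
    · left; rw [← hvt]; exact (hends n (a+1 + 1*q) (by omega) (by omega)).1
    · exact Or.inr ⟨a+1 + 1*q, t, by omega, by omega, htpos, ht, hvt.symm⟩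
  · simp at h; exact Or.inl h

theorem wlist_getElem?_first
    (hends : ∀ n i, 1 ≤ i → i ≤ n → vtx n i 0 = v0 n ∧ vtx n i (len n i) = v0 n)
    (n a : ℕ) (ha1 : 1 ≤ a) (ha : a ≤ n) (hl : 1 ≤ len n a) (t : ℕ) (ht : t ≤ len n a) :
    (wlist V len v0 vtx n a)[1 + t]? = some (vtx n a t) := by
  rw [wlist_decomp V len v0 vtx n a ha, show 1 + t = t + 1 by omega, List.getElem?_cons_succ,
    List.append_assoc]
  exact double_getElem? V len v0 vtx n a (hends n a ha1 ha).1 (hends n a ha1 ha).2 hl _ t ht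

theorem wlist_getElem?_second
    (hends : ∀ n i, 1 ≤ i → i ≤ n → vtx n i 0 = v0 n ∧ vtx n i (len n i) = v0 n)
    (n a : ℕ) (ha1 : 1 ≤ a) (ha : a + 1 ≤ n) (hl : 1 ≤ len n (a+1)) (t : ℕ)
    (ht : t ≤ len n (a+1)) :
    (wlist V len v0 vtx n a)[1 + 2 * len n a + t]? = some (vtx n (a+1) t) := by
  have hd := wlist_decomp V len v0 vtx n a (by omega)
  obtain ⟨c, hc⟩ : ∃ c, n - a = c + 1 := ⟨n - a - 1, by omega⟩
  rw [hc, List.range'_succ, List.flatMap_cons] at hd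
  have hcl := circList_length V len vtx n a
  rw [hd, show 1 + 2 * len n a + t = (2 * len n a + t) + 1 by omega, List.getElem?_cons_succ]
  simp only [List.append_assoc]
  rw [List.getElem?_append_right (by omega),
    List.getElem?_append_right (by simp [hcl]; omega)]
  rw [show 2 * len n a + t - (circList (vtx n) a (len n a)).length -
      (circList (vtx n) a (len n a)).length = t by simp [hcl]; omega]
  exact double_getElem? V len v0 vtx n (a+1) (hends n (a+1) (by omega) ha).1
    (hends n (a+1) (by omega) ha).2 hl _ t ht

end wlistLemmas

theorem invLim_compact (V : ℕ → Type) [∀ n, TopologicalSpace (V n)]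
    [∀ n, DiscreteTopology (V n)] [∀ n, Fintype (V n)] (φ : ∀ n, V (n + 1) → V n) :
    CompactSpace (InvLim V φ) := by
  have hclosed : IsClosed {x : ∀ n, V n | ∀ n, φ n (x (n + 1)) = x n} := by
    have : {x : ∀ n, V n | ∀ n, φ n (x (n + 1)) = x n} =
        ⋂ n, {x : ∀ n, V n | φ n (x (n + 1)) = x n} := by
      ext x; simp
    rw [this]
    exact isClosed_iInter fun n => isClosed_eq
      (continuous_of_discreteTopology.comp (continuous_apply (n+1))) (continuous_apply n)
  exact isCompact_iff_compactSpace.mp hclosed.isCompact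

theorem invLim_coord_closed (V : ℕ → Type) [∀ n, TopologicalSpace (V n)]
    [∀ n, DiscreteTopology (V n)] (φ : ∀ n, V (n + 1) → V n) (n : ℕ) :
    IsClosed {q : InvLim V φ × InvLim V φ | q.1.1 n ≠ q.2.1 n} := by
  have hc1 : Continuous fun q : InvLim V φ × InvLim V φ => q.1.1 n :=
    (continuous_apply n).comp (continuous_subtype_val.comp continuous_fst)
  have hc2 : Continuous fun q : InvLim V φ × InvLim V φ => q.2.1 n :=
    (continuous_apply n).comp (continuous_subtype_val.comp continuous_snd)
  exact (isClosed_discrete {p : V n × V n | p.1 ≠ p.2}).preimage (hc1.prodMk hc2)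

theorem metric_eps {X : Type} [MetricSpace X] [CompactSpace X] (s : Set (X × X))
    (hs : IsClosed s) (hss : ∀ q ∈ s, q.1 ≠ q.2) (hne : s.Nonempty) :
    ∃ ε > 0, ∀ q ∈ s, ε ≤ dist q.1 q.2 := by
  have hcomp : IsCompact s := hs.isCompact
  have hcont : ContinuousOn (fun q : X × X => dist q.1 q.2) s :=
    (continuous_fst.dist continuous_snd).continuousOn
  obtain ⟨q₀, hq₀, hmin⟩ := hcomp.exists_isMinOn hne hcont
  exact ⟨dist q₀.1 q₀.2, dist_pos.mpr (hss q₀ hq₀), fun q hq => hmin hq⟩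

theorem metric_bdd {X : Type} [MetricSpace X] [CompactSpace X] :
    ∃ C, ∀ a b : X, dist a b ≤ C := by
  obtain ⟨C, hC⟩ := Metric.isBounded_iff.mp (isCompact_univ (X := X)).isBounded
  exact ⟨C, fun a b => hC (Set.mem_univ a) (Set.mem_univ b)⟩

theorem stmt18
    (V : ℕ → Type) [∀ n, TopologicalSpace (V n)] [∀ n, DiscreteTopology (V n)]
    [∀ n, Fintype (V n)]
    (E : ∀ n, V n → V n → Prop) (φ : ∀ n, V (n + 1) → V n)
    (len : ℕ → ℕ → ℕ) (v0 : ∀ n, V n) (vtx : ∀ n, ℕ → ℕ → V n)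
    (hV0 : ∀ u : V 0, u = v0 0)
    (hE0 : ∀ u v : V 0, E 0 u v ↔ u = v0 0 ∧ v = v0 0)
    (hends : ∀ n i, 1 ≤ i → i ≤ n → vtx n i 0 = v0 n ∧ vtx n i (len n i) = v0 n)
    (hlen2 : ∀ n i, 1 ≤ i → i ≤ n → 2 ≤ len n i)
    (hrec : ∀ n i, 1 ≤ i → i ≤ n →
      len (n + 1) i = 2 + 2 * ∑ j ∈ Finset.Icc i n, len n j)
    (hne : ∀ n i j, 1 ≤ i → i ≤ n → 0 < j → j < len n i → vtx n i j ≠ v0 n)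
    (hinj : ∀ n i j i' j', 1 ≤ i → i ≤ n → 1 ≤ i' → i' ≤ n →
      0 < j → j < len n i → 0 < j' → j' < len n i' →
      vtx n i j = vtx n i' j' → i = i' ∧ j = j')
    (hall : ∀ n, 1 ≤ n → ∀ u : V n,
      u = v0 n ∨ ∃ i j, 1 ≤ i ∧ i ≤ n ∧ 0 < j ∧ j < len n i ∧ u = vtx n i j)
    (hE : ∀ n, 1 ≤ n → ∀ u v : V n, E n u v ↔
      (u = v0 n ∧ v = v0 n) ∨
      ∃ i j, 1 ≤ i ∧ i ≤ n ∧ j < len n i ∧ u = vtx n i j ∧ v = vtx n i (j + 1))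
    (hphi0 : ∀ n, φ n (v0 (n + 1)) = v0 n)
    (hphitop : ∀ n j, j ≤ len (n + 1) (n + 1) → φ n (vtx (n + 1) (n + 1) j) = v0 n)
    (hphiwalk : ∀ n i, 1 ≤ i → i ≤ n →
      List.map (φ n) (circList (vtx (n + 1)) i (len (n + 1) i)) =
        v0 n :: (((List.range' i (n + 1 - i)).flatMap fun k =>
          circList (vtx n) k (len n k) ++ circList (vtx n) k (len n k)) ++ [v0 n]))
    (hcov : ∀ n, IsCover (E (n + 1)) (E n) (φ n))
    (f : InvLim V φ ≃ₜ InvLim V φ)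
    (hf : ∀ x y : InvLim V φ, ERel E φ x y ↔ f x = y)
    (m : MetricSpace (InvLim V φ))
    (hm : mtop m = (inferInstance : TopologicalSpace (InvLim V φ)))
    (p : InvLim V φ) (hp : ∀ n, p.1 n = v0 n)
    (degv : ∀ n, V n → ℕ∞)
    (hdegv0 : ∀ n, degv n (v0 n) = ⊤)
    (hdegvi : ∀ n i j, 1 ≤ i → i ≤ n → 0 < j → j < len n i →
      degv n (vtx n i j) = (i : ℕ∞)) :
    ∀ x y : InvLim V φ, x ≠ y → x ≠ p → y ≠ p →
      (⨅ n, degv n (x.1 n)) + 2 ≤ (⨅ n, degv n (y.1 n)) →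
      (⨅ n, degv n (y.1 n)) ≠ ⊤ →
      0 < Filter.limsup (fun k => mdist m ((⇑f)^[k] x) ((⇑f)^[k] y)) Filter.atTop := by
  intro x y hxy hxp hyp hsum hytop
  -- basic length facts
  have h1len : ∀ q a, 1 ≤ a → a ≤ q → 2 + 2 * len q a ≤ len (q+1) a := by
    intro q a ha1 haq
    rw [hrec q a ha1 haq]
    have : len q a ≤ ∑ j ∈ Finset.Icc a q, len q j :=
      Finset.single_le_sum (f := fun j => len q j) (fun _ _ => Nat.zero_le _)
        (Finset.mem_Icc.mpr ⟨le_refl a, haq⟩)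
    omega
  have h2len : ∀ q a, 1 ≤ a → a + 1 ≤ q → 2 + 2 * len q a + 2 * len q (a+1) ≤ len (q+1) a := by
    intro q a ha1 haq
    rw [hrec q a ha1 (by omega)]
    have hsub : ({a, a+1} : Finset ℕ) ⊆ Finset.Icc a q := by
      intro t ht
      simp only [Finset.mem_insert, Finset.mem_singleton] at ht
      rcases ht with rfl | rfl <;> simp [Finset.mem_Icc] <;> omega
    have h2 : ∑ j ∈ ({a, a+1} : Finset ℕ), len q j ≤ ∑ j ∈ Finset.Icc a q, len q j :=
      Finset.sum_le_sum_of_subset hsub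
    rw [Finset.sum_pair (by omega)] at h2
    omega
  -- walk-list facts
  have hW : ∀ q a, 1 ≤ a → a ≤ q →
      List.map (φ q) (circList (vtx (q+1)) a (len (q+1) a)) = wlist V len v0 vtx q a :=
    fun q a h1 h2 => hphiwalk q a h1 h2
  have hphi_get : ∀ q a b, 1 ≤ a → a ≤ q → b < len (q+1) a →
      (wlist V len v0 vtx q a)[b]? = some (φ q (vtx (q+1) a b)) := by
    intro q a b h1 h2 hb
    rw [← hW q a h1 h2, List.getElem?_map, circList_getElem? V len vtx (q+1) a b hb,
      Option.map_some]
  have hphi_first : ∀ q a t, 1 ≤ a → a ≤ q → t ≤ len q a →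
      φ q (vtx (q+1) a (1 + t)) = vtx q a t := by
    intro q a t h1 h2 ht
    have hlb : 1 + t < len (q+1) a := by
      have := h1len q a h1 h2; omega
    have e1 := hphi_get q a (1+t) h1 h2 hlb
    have e2 := wlist_getElem?_first V len v0 vtx hends q a h1 h2
      (by have := hlen2 q a h1 h2; omega) t ht
    rw [e1] at e2
    exact Option.some_injective _ e2
  have hphi_second : ∀ q a t, 1 ≤ a → a + 1 ≤ q → t ≤ len q (a+1) →
      φ q (vtx (q+1) a (1 + 2 * len q a + t)) = vtx q (a+1) t := by
    intro q a t h1 h2 ht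
    have hlb : 1 + 2 * len q a + t < len (q+1) a := by
      have := h2len q a h1 h2
      have := hlen2 q (a+1) (by omega) h2
      omega
    have e1 := hphi_get q a (1 + 2*len q a + t) h1 (by omega) hlb
    have e2 := wlist_getElem?_second V len v0 vtx hends q a h1 h2
      (by have := hlen2 q (a+1) (by omega) h2; omega) t ht
    rw [e1] at e2
    exact Option.some_injective _ e2
  have hphi_all : ∀ q a b, 1 ≤ a → a ≤ q → b < len (q+1) a →
      φ q (vtx (q+1) a b) = v0 q ∨
        ∃ k t, a ≤ k ∧ k ≤ q ∧ 0 < t ∧ t < len q k ∧ φ q (vtx (q+1) a b) = vtx q k t := by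
    intro q a b h1 h2 hb
    exact wlist_mem V len v0 vtx hends q a h1 h2 _ (mem_of_getElem?' (hphi_get q a b h1 h2 hb))
  have hphi_tail : ∀ q a b, 1 ≤ a → a ≤ q → 1 + 2 * len q a ≤ b → b < len (q+1) a →
      φ q (vtx (q+1) a b) = v0 q ∨
        ∃ k t, a + 1 ≤ k ∧ k ≤ q ∧ 0 < t ∧ t < len q k ∧ φ q (vtx (q+1) a b) = vtx q k t := by
    intro q a b h1 h2 hb1 hb
    exact wlist_tail_mem V len v0 vtx hends q a h1 h2 b hb1 _ (hphi_get q a b h1 h2 hb)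
  -- dynamics basics
  have hStep : ∀ (z : InvLim V φ) (q : ℕ), E q (z.1 q) ((f z).1 q) :=
    fun z q => ((hf z (f z)).mpr rfl) q
  have hcoord : ∀ (z : InvLim V φ) (q : ℕ), φ q (z.1 (q+1)) = z.1 q := fun z q => z.2 q
  have hsucc : ∀ q a b (v : V q), 1 ≤ a → a ≤ q → 0 < b → b < len q a →
      E q (vtx q a b) v → v = vtx q a (b+1) := by
    intro q a b v ha1 haq hb0 hblen hedge
    rw [hE q (by omega)] at hedge
    rcases hedge with ⟨hu, -⟩ | ⟨i', j', hi1, hiq, hjlen, hu, hv⟩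
    · exact absurd hu (hne q a b ha1 haq hb0 hblen)
    · rcases Nat.eq_zero_or_pos j' with rfl | hj0
      · exact absurd (hu.trans (hends q i' hi1 hiq).1) (hne q a b ha1 haq hb0 hblen)
      · obtain ⟨rfl, rfl⟩ := hinj q i' j' a b hi1 hiq ha1 haq hj0 hjlen hb0 hblen hu.symm
        exact hv
  -- degree machinery
  set D : InvLim V φ → ℕ∞ := fun z => ⨅ q, degv q (z.1 q) with hD
  have hD_le : ∀ (z : InvLim V φ) (q : ℕ), D z ≤ degv q (z.1 q) := fun z q => iInf_le _ q
  have hlevel : ∀ (z : InvLim V φ) (q : ℕ), degv (q+1) (z.1 (q+1)) ≤ degv q (z.1 q) := by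
    intro z q
    rcases hall (q+1) (by omega) (z.1 (q+1)) with hv | ⟨a, b, ha1, haq, hb0, hblen, hz⟩
    · have hzq : z.1 q = v0 q := by rw [← hcoord z q, hv, hphi0]
      rw [hzq, hdegv0]; exact le_top
    · rw [hz, hdegvi (q+1) a b ha1 haq hb0 hblen]
      have hzq : z.1 q = φ q (vtx (q+1) a b) := by rw [← hcoord z q, hz]
      rcases Nat.eq_or_lt_of_le haq with rfl | haq'
      · rw [hzq, hphitop q b (by omega), hdegv0]; exact le_top
      · rcases hphi_all q a b ha1 (by omega) hblen with h0 | ⟨k, t, hak, hkq, ht0, htlen, he⟩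
        · rw [hzq, h0, hdegv0]; exact le_top
        · rw [hzq, he, hdegvi q k t (by omega) hkq ht0 htlen]
          exact_mod_cast hak
  have hlevel_le : ∀ (z : InvLim V φ) (q q' : ℕ), q ≤ q' →
      degv q' (z.1 q') ≤ degv q (z.1 q) := by
    intro z q q' hqq
    induction q' , hqq using Nat.le_induction with
    | base => exact le_refl _
    | succ q' hqq ih => exact le_trans (hlevel z q') ih
  have heventual : ∀ (z : InvLim V φ) (i : ℕ), D z = (i : ℕ∞) →
      ∃ M, 1 ≤ M ∧ 1 ≤ i ∧ ∀ q, M ≤ q →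
        i ≤ q ∧ ∃ b, 0 < b ∧ b < len q i ∧ z.1 q = vtx q i b := by
    intro z i hDz
    have hex : ∃ q, degv q (z.1 q) ≤ (i : ℕ∞) := by
      by_contra hc
      push_neg at hc
      have : (i : ℕ∞) + 1 ≤ D z := by
        apply le_iInf
        intro q
        exact (ENat.add_one_le_iff (by simp)).mpr (hc q)
      rw [hDz] at this
      have h2 : i + 1 ≤ i := by exact_mod_cast this
      omega
    obtain ⟨M, hM⟩ := hex
    have hM1 : 1 ≤ M := by
      rcases Nat.eq_zero_or_pos M with rfl | h
      · exfalso
        rw [hV0 (z.1 0), hdegv0] at hM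
        exact absurd (top_le_iff.mp hM) (by simp)
      · exact h
    have hkey : ∀ q, M ≤ q → degv q (z.1 q) = (i : ℕ∞) :=
      fun q hq => le_antisymm (le_trans (hlevel_le z M q hq) hM) (hDz ▸ hD_le z q)
    have hmain : ∀ q, M ≤ q → (1 ≤ i ∧ i ≤ q) ∧ ∃ b, 0 < b ∧ b < len q i ∧ z.1 q = vtx q i b := by
      intro q hq
      rcases hall q (by omega) (z.1 q) with hv | ⟨a, b, ha1, haq, hb0, hblen, hz⟩
      · exfalso
        have := hkey q hq
        rw [hv, hdegv0] at this
        exact (by simp : ((⊤ : ℕ∞) ≠ (i : ℕ∞))) this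
      · have := hkey q hq
        rw [hz, hdegvi q a b ha1 haq hb0 hblen] at this
        have hai : a = i := by exact_mod_cast this
        subst hai
        exact ⟨⟨ha1, haq⟩, b, hb0, hblen, hz⟩
    exact ⟨M, hM1, ((hmain M (le_refl M)).1).1,
      fun q hq => ⟨((hmain q hq).1).2, (hmain q hq).2⟩⟩
  have hDmono : ∀ z : InvLim V φ, D z ≤ D (f z) := by
    intro z
    apply le_iInf
    intro q
    have hedge := hStep z (q+1)
    have hproj : (f z).1 q = φ q ((f z).1 (q+1)) := (hcoord (f z) q).symm
    rcases hall (q+1) (by omega) (z.1 (q+1)) with hv | ⟨a, b, ha1, haq, hb0, hblen, hz⟩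
    · rw [hE (q+1) (by omega), hv] at hedge
      rcases hedge with ⟨-, hv2⟩ | ⟨a, b, ha1, haq, hblen, hu, hv2⟩
      · rw [hproj, hv2, hphi0, hdegv0]; exact le_top
      · have hb0 : b = 0 := by
          by_contra hb
          exact hne (q+1) a b ha1 haq (by omega) hblen hu.symm
        subst hb0
        rw [hproj, hv2]
        rcases Nat.eq_or_lt_of_le haq with rfl | haq'
        · rw [hphitop q 1 (by have := hlen2 (q+0+1) (q+0+1) (by omega) (le_refl _); omega),
            hdegv0]
          exact le_top
        · rw [show (0+1 : ℕ) = 1 + 0 by omega, hphi_first q a 0 ha1 (by omega) (by omega),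
            (hends q a ha1 (by omega)).1, hdegv0]
          exact le_top
    · have hDza : D z ≤ (a : ℕ∞) := by
        have := hD_le z (q+1)
        rwa [hz, hdegvi (q+1) a b ha1 haq hb0 hblen] at this
      have hnext : (f z).1 (q+1) = vtx (q+1) a (b+1) := by
        apply hsucc (q+1) a b _ ha1 haq hb0 hblen
        rw [← hz]; exact hedge
      rcases Nat.lt_or_ge (b+1) (len (q+1) a) with hb1 | hb1'
      case inr =>
        have hb1 : b + 1 = len (q+1) a := by omega
        rw [hproj, hnext, hb1, (hends (q+1) a ha1 haq).2, hphi0, hdegv0]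
        exact le_top
      · rw [hproj, hnext]
        rcases Nat.eq_or_lt_of_le haq with rfl | haq'
        · rw [hphitop q (b+1) (by omega), hdegv0]; exact le_top
        · rcases hphi_all q a (b+1) ha1 (by omega) hb1 with h0 | ⟨k, t, hak, hkq, ht0, htlen, he⟩
          · rw [h0, hdegv0]; exact le_top
          · rw [he, hdegvi q k t (by omega) hkq ht0 htlen]
            exact le_trans hDza (by exact_mod_cast hak)
  have hbound : ∀ q i b b', 1 ≤ i → i ≤ q → 0 < b → b < len (q+1) i → 0 < b' → b' < len q i →
      φ q (vtx (q+1) i b) = vtx q i b' → b ≤ 2 * len q i := by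
    intro q i b b' hi1 hiq hb0 hblen hb0' hblen' hphiv
    by_contra hc
    rcases hphi_tail q i b hi1 hiq (by omega) hblen with h0 | ⟨k, t, hik, hkq, ht0, htlen, he⟩
    · rw [hphiv] at h0
      exact hne q i b' hi1 hiq hb0' hblen' h0
    · rw [hphiv] at he
      obtain ⟨rfl, -⟩ := hinj q i b' k t hi1 hiq (by omega) hkq hb0' hblen' ht0 htlen he
      omega
  have hDdec : ∀ (z : InvLim V φ) (i : ℕ), D z = (i : ℕ∞) → D (f z) ≤ (i : ℕ∞) := by
    intro z i hDz
    obtain ⟨M, hM1, hi1, hMall⟩ := heventual z i hDz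
    obtain ⟨hiM, b, hb0, hblen, hzM1⟩ := hMall (M+1) (by omega)
    obtain ⟨hiM', b', hb0', hblen', hzM⟩ := hMall M (le_refl M)
    have hphiv : φ M (vtx (M+1) i b) = vtx M i b' := by
      rw [← hzM1, hcoord z M, hzM]
    have hb2 : b ≤ 2 * len M i := hbound M i b b' hi1 hiM' hb0 hblen hb0' hblen' hphiv
    have hblt : b + 1 < len (M+1) i := by
      have := h1len M i hi1 hiM'; omega
    have hnext : (f z).1 (M+1) = vtx (M+1) i (b+1) := by
      apply hsucc (M+1) i b _ hi1 hiM hb0 hblen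
      rw [← hzM1]; exact hStep z (M+1)
    calc D (f z) ≤ degv (M+1) ((f z).1 (M+1)) := hD_le _ _
    _ = (i : ℕ∞) := by rw [hnext, hdegvi (M+1) i (b+1) hi1 hiM (by omega) hblt]
  -- extract natural number degrees
  have hsum' : D x + 2 ≤ D y := hsum
  have hytop' : D y ≠ ⊤ := hytop
  have hxtop : D x ≠ ⊤ := by
    intro hc
    rw [hc, top_add] at hsum'
    exact hytop' (top_le_iff.mp hsum')
  obtain ⟨i, hi⟩ := WithTop.ne_top_iff_exists.mp hxtop
  obtain ⟨j, hj⟩ := WithTop.ne_top_iff_exists.mp hytop'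
  have hDx : D x = (i : ℕ∞) := hi.symm
  have hDy : D y = (j : ℕ∞) := hj.symm
  have hij : i + 2 ≤ j := by
    rw [hDx, hDy] at hsum'
    exact_mod_cast hsum'
  -- degree along orbits
  have hDorbx : ∀ k, D ((⇑f)^[k] x) = (i : ℕ∞) := by
    intro k
    induction k with
    | zero => simpa using hDx
    | succ k ih =>
      rw [Function.iterate_succ_apply']
      exact le_antisymm (hDdec _ i ih) (ih ▸ hDmono ((⇑f)^[k] x))
  have hDorby : ∀ k, (j : ℕ∞) ≤ D ((⇑f)^[k] y) := by
    intro k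
    induction k with
    | zero => simpa using hDy.ge
    | succ k ih =>
      rw [Function.iterate_succ_apply']
      exact le_trans ih (hDmono _)
  -- fix the level nn
  obtain ⟨My, hMy1, hj1, hMyall⟩ := heventual y j hDy
  set nn := My with hnn
  have hjnn : j ≤ nn := (hMyall nn (le_refl _)).1
  have hi1 : 1 ≤ i := by
    obtain ⟨Mx, hMx1, hi1', -⟩ := heventual x i hDx
    exact hi1'
  -- traversal lemmas
  have htravel : ∀ q a k b, 1 ≤ a → a ≤ q → 0 < b → ((⇑f)^[k] x).1 q = vtx q a b →
      ∀ s, b + s ≤ len q a → ((⇑f)^[k+s] x).1 q = vtx q a (b+s) := by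
    intro q a k b ha1 haq hb0 hzb s
    induction s with
    | zero => intro _; simpa using hzb
    | succ s ih =>
      intro hs
      have hcur := ih (by omega)
      have hedge : E q (((⇑f)^[k+s] x).1 q) (((⇑f)^[k+s+1] x).1 q) := by
        rw [Function.iterate_succ_apply']
        exact hStep _ q
      rw [hcur] at hedge
      have := hsucc q a (b+s) _ ha1 haq (by omega) (by omega) hedge
      rw [show k + (s+1) = k + s + 1 by omega]
      exact this.trans (congrArg (vtx q a) (by omega))
  have hpush : ∀ q a k, 1 ≤ a → a ≤ q →
      (∀ t, t ≤ len (q+1) a → ((⇑f)^[k+t] x).1 (q+1) = vtx (q+1) a t) →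
      (∀ t, t ≤ len q a → ((⇑f)^[k+1+t] x).1 q = vtx q a t) := by
    intro q a k ha1 haq hP t ht
    have h1 : 1 + t ≤ len (q+1) a := by
      have := h1len q a ha1 haq; omega
    have := hP (1+t) h1
    rw [show k + (1+t) = k+1+t by omega] at this
    rw [← hcoord ((⇑f)^[k+1+t] x) q, this]
    exact hphi_first q a t ha1 haq ht
  have hdown : ∀ d a k, 1 ≤ a → a ≤ nn →
      (∀ t, t ≤ len (nn+d) a → ((⇑f)^[k+t] x).1 (nn+d) = vtx (nn+d) a t) →
      ∃ k', k ≤ k' ∧ ∀ t, t ≤ len nn a → ((⇑f)^[k'+t] x).1 nn = vtx nn a t := by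
    intro d
    induction d with
    | zero => exact fun a k ha1 hann hP => ⟨k, le_refl k, hP⟩
    | succ d ih =>
      intro a k ha1 hann hP
      have hP' := hpush (nn+d) a k ha1 (by omega) (by
        exact hP)
      obtain ⟨k', hk', hres⟩ := ih a (k+1) ha1 hann hP'
      exact ⟨k', by omega, hres⟩
  -- the main frequency claim
  have hfreq : ∀ K, ∃ k, K ≤ k ∧ ((⇑f)^[k] x).1 nn ≠ ((⇑f)^[k] y).1 nn := by
    intro K
    obtain ⟨Mx, hMx1, -, hMxall⟩ := heventual ((⇑f)^[K] x) i (hDorbx K)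
    set q := max Mx nn with hq
    have hqnn : nn ≤ q := le_max_right _ _
    have hqMx : Mx ≤ q := le_max_left _ _
    obtain ⟨hiq1, b, hb0, hblen, hz1⟩ := hMxall (q+1) (by omega)
    obtain ⟨hiq, b', hb0', hblen', hz0⟩ := hMxall q hqMx
    have hphiv : φ q (vtx (q+1) i b) = vtx q i b' := by
      rw [← hz1, hcoord ((⇑f)^[K] x) q, hz0]
    have hb2 : b ≤ 2 * len q i := hbound q i b b' hi1 hiq hb0 hblen hb0' hblen' hphiv
    have hi1q : i + 1 ≤ q := by omega
    obtain ⟨s1, hs1⟩ : ∃ s1, b + s1 = 1 + 2 * len q i := ⟨1 + 2 * len q i - b, by omega⟩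
    have htrav : ∀ t, t ≤ len q (i+1) →
        ((⇑f)^[K + (s1 + t)] x).1 (q+1) = vtx (q+1) i (1 + 2 * len q i + t) := by
      intro t ht
      have hbnd : b + (s1 + t) ≤ len (q+1) i := by
        have h2 := h2len q i hi1 hi1q; omega
      have h3 := htravel (q+1) i K b hi1 hiq1 hb0 hz1 (s1+t) hbnd
      rw [show b + (s1 + t) = 1 + 2 * len q i + t by omega] at h3
      exact h3
    have hPq : ∀ t, t ≤ len q (i+1) →
        ((⇑f)^[(K + s1) + t] x).1 q = vtx q (i+1) t := by
      intro t ht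
      rw [← hcoord ((⇑f)^[(K + s1) + t] x) q, show K + s1 + t = K + (s1 + t) by omega,
        htrav t ht]
      exact hphi_second q i t hi1 hi1q ht
    -- push down to level nn
    have hq' : q = nn + (q - nn) := by omega
    obtain ⟨k', hk', hPnn⟩ := hdown (q - nn) (i+1) (K + s1)
      (by omega) (by omega) (by rw [← hq']; exact hPq)
    refine ⟨k' + 1, by omega, ?_⟩
    have hX : ((⇑f)^[k'+1] x).1 nn = vtx nn (i+1) 1 := by
      have := hPnn 1 (by have := hlen2 nn (i+1) (by omega) (by omega); omega)
      simpa using this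
    intro hcontra
    have hYdeg : (j : ℕ∞) ≤ degv nn (((⇑f)^[k'+1] y).1 nn) :=
      le_trans (hDorby (k'+1)) (hD_le _ nn)
    rw [← hcontra, hX,
      hdegvi nn (i+1) 1 (by omega) (by omega) (by omega)
        (by have := hlen2 nn (i+1) (by omega) (by omega); omega)] at hYdeg
    have : j ≤ i + 1 := by exact_mod_cast hYdeg
    omega
  -- topology endgame
  set s : Set (InvLim V φ × InvLim V φ) :=
    {q : InvLim V φ × InvLim V φ | q.1.1 nn ≠ q.2.1 nn} with hs
  have hsclosed : IsClosed s := invLim_coord_closed V φ nn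
  have hsne : s.Nonempty := by
    obtain ⟨k, -, hk⟩ := hfreq 0
    exact ⟨((⇑f)^[k] x, (⇑f)^[k] y), hk⟩
  have hsss : ∀ q ∈ s, q.1 ≠ q.2 := by
    intro q hq hc
    exact hq (by rw [hc])
  haveI : CompactSpace (InvLim V φ) := invLim_compact V φ
  have hT : @CompactSpace (InvLim V φ) (mtop m) := by rw [hm]; infer_instance
  have hs' : @IsClosed (InvLim V φ × InvLim V φ)
      (@instTopologicalSpaceProd _ _ (mtop m) (mtop m)) s := by
    rw [hm]; exact hsclosed
  obtain ⟨ε, hε, hεs⟩ := @metric_eps (InvLim V φ) m hT s hs' hsss hsne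
  obtain ⟨C, hC⟩ := @metric_bdd (InvLim V φ) m hT
  have hbdd : Filter.IsBoundedUnder (· ≤ ·) Filter.atTop
      (fun k => mdist m ((⇑f)^[k] x) ((⇑f)^[k] y)) :=
    Filter.isBoundedUnder_of ⟨C, fun k => hC _ _⟩
  have hfreq' : ∃ᶠ k in Filter.atTop, ε ≤ mdist m ((⇑f)^[k] x) ((⇑f)^[k] y) := by
    rw [Filter.frequently_atTop]
    intro K
    obtain ⟨k, hk, hne'⟩ := hfreq K
    exact ⟨k, hk, hεs ((⇑f)^[k] x, (⇑f)^[k] y) hne'⟩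
  exact lt_of_lt_of_le hε (Filter.le_limsup_of_frequently_le hfreq' hbdd)
end
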